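/- arXiv:1303.2828 — 7 statements merged into one kernel-verified Lean document; each statement's English description precedes it below -/
import Mathlib

section
/- Every at most countable complete linear order is Boolean; that is, if L is an at most countable linear order in which every subset has a supremum and an infimum, then for all x, y ∈ L with x < y there exist a, b ∈ L with x ≤ a < b ≤ y and no element strictly between a and b. -/
open Set

/-- `A ⊆ X` is a copy of `⟨X,r⟩`: the range of a self-embedding of the relation `r`,
i.e. `A` with the induced order is order-isomorphic to `⟨X,r⟩`. -/
def IsCopy {X : Type*} (r : X → X → Prop) (A : Set X) : Prop :=
  ∃ f : X → X, Function.Injective f ∧ Set.range f = A ∧ ∀ x y, r x y ↔ r (f x) (f y)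

/-- The family `P(X)` of copies of `⟨X,r⟩`. -/
def Copies {X : Type*} (r : X → X → Prop) : Set (Set X) :=
  {A | IsCopy r A}

/-- `C` is a maximal chain in the family `S`, ordered by inclusion. -/
def IsMaxChainIn {X : Type*} (S : Set (Set X)) (C : Set (Set X)) : Prop :=
  C ⊆ S ∧ IsChain (· ⊆ ·) C ∧
    ∀ C' : Set (Set X), C' ⊆ S → IsChain (· ⊆ ·) C' → C ⊆ C' → C' = C

/-- A linear order is complete iff every subset has a supremum and an infimum. -/
def CompleteLO (L : Type*) [LinearOrder L] : Prop :=
  ∀ S : Set L, (∃ a, IsLUB S a) ∧ (∃ b, IsGLB S b)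

/-- `L` embeds into the reals by a strictly increasing map. -/
def REmbeddable (L : Type*) [LinearOrder L] : Prop :=
  ∃ f : L → ℝ, StrictMono f

/-- `L` has a minimum `0_L` which is non-isolated. -/
def BotNonIsolated (L : Type*) [LinearOrder L] : Prop :=
  ∃ z : L, IsBot z ∧ ∀ x, z < x → ∃ y, z < y ∧ y < x

/-- `L` has dense jumps. -/
def DenseJumps (L : Type*) [LinearOrder L] : Prop :=
  ∀ x y : L, x < y → ∃ a b : L, x ≤ a ∧ a < b ∧ b ≤ y ∧ ∀ c, ¬ (a < c ∧ c < b)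

/-- A linear order is Boolean iff it is complete and has dense jumps. -/
def BooleanLO (L : Type*) [LinearOrder L] : Prop :=
  CompleteLO L ∧ DenseJumps L

/-- Every isomorphism between finite suborders of `⟨X,r⟩` extends to an automorphism
of `⟨X,r⟩`. -/
def UltrahomogeneousRel {X : Type*} (r : X → X → Prop) : Prop :=
  ∀ (A : Set X) (f : X → X), A.Finite → Set.InjOn f A →
    (∀ x ∈ A, ∀ y ∈ A, (r x y ↔ r (f x) (f y))) →
    ∃ g : X ≃ X, (∀ x y, r x y ↔ r (g x) (g y)) ∧ ∀ x ∈ A, g x = f x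

/-- `⟨D,r⟩` is a strict partial order with the extension property defining the
countable random poset. -/
def IsRandomPosetRel {D : Type*} (r : D → D → Prop) : Prop :=
  (∀ x, ¬ r x x) ∧ (∀ x y z, r x y → r y z → r x z) ∧
    ∀ L G U : Finset D, Disjoint L G → Disjoint L U → Disjoint G U →
      (∀ l ∈ L, ∀ g ∈ G, r l g) →
      (∀ u ∈ U, ∀ l ∈ L, ¬ r u l) →
      (∀ u ∈ U, ∀ g ∈ G, ¬ r g u) →
      ∃ p : D, p ∉ L ∧ p ∉ G ∧ p ∉ U ∧ (∀ l ∈ L, r l p) ∧ (∀ g ∈ G, r p g) ∧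
        ∀ u ∈ U, p ≠ u ∧ ¬ r p u ∧ ¬ r u p

/-- A positive family of subsets of `D`. -/
def IsPositiveFamily {D : Type*} (P : Set (Set D)) : Prop :=
  ∅ ∉ P ∧ (∀ A B : Set D, A ∈ P → A ⊆ B → B ∈ P) ∧
    (∀ A ∈ P, ∀ F : Set D, F.Finite → A \ F ∈ P) ∧
    ∃ A ∈ P, Aᶜ.Infinite

/-- Isomorphism of binary relational structures. -/
def RelIsoRel {X Y : Type*} (r : X → X → Prop) (s : Y → Y → Prop) : Prop :=
  ∃ e : X ≃ Y, ∀ x y, r x y ↔ s (e x) (e y)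

/-!
If some interval `[x, y]` had no jump, it would be a densely ordered linear order in which
every nonempty set has a supremum. Enumerating its points as `e 0, e 1, …`, choose nested
intervals `[u n, v n]` such that `[u (n+1), v (n+1)]` misses `e n`; the supremum of the `u n`
lies in every one of these intervals, so it is none of the `e n`.
-/

section DenselyOrdered

variable {α : Type*} [LinearOrder α] [DenselyOrdered α]

theorem exists_Icc_subset_notMem {a b : α} (hab : a < b) (p : α) :
    ∃ a' b', a' < b' ∧ Icc a' b' ⊆ Icc a b ∧ p ∉ Icc a' b' := by
  obtain ⟨c, hac, hcb⟩ := exists_between hab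
  obtain ⟨d, hcd, hdb⟩ := exists_between hcb
  rcases lt_or_ge p d with hpd | hdp
  · exact ⟨d, b, hdb, Icc_subset_Icc_left (hac.trans hcd).le, fun hp => hpd.not_ge hp.1⟩
  · exact ⟨a, c, hac, Icc_subset_Icc_right hcb.le, fun hp => (hcd.trans_le hdp).not_ge hp.2⟩

theorem exists_nested_Icc_avoiding {a b : α} (hab : a < b) (e : ℕ → α) :
    ∃ u v : ℕ → α, Monotone u ∧ Antitone v ∧ (∀ n, u n < v n) ∧
      ∀ n, e n ∉ Icc (u (n + 1)) (v (n + 1)) := by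
  choose! a' b' hlt hsub hnotMem using
    fun (I : α × α) (hI : I.1 < I.2) => exists_Icc_subset_notMem hI
  let I : ℕ → α × α := fun n => Nat.rec (a, b) (fun n J => (a' J (e n), b' J (e n))) n
  have hI : ∀ n, (I n).1 < (I n).2 := fun n => Nat.rec hab (fun n ih => hlt _ ih _) n
  have hsucc : ∀ n, Icc (I (n + 1)).1 (I (n + 1)).2 ⊆ Icc (I n).1 (I n).2 :=
    fun n => hsub _ (hI n) _
  refine ⟨fun n => (I n).1, fun n => (I n).2, monotone_nat_of_le_succ fun n => ?_,
    antitone_nat_of_succ_le fun n => ?_, hI, fun n => hnotMem _ (hI n) _⟩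
  · exact (Icc_subset_Icc_iff (hI (n + 1)).le).1 (hsucc n) |>.1
  · exact (Icc_subset_Icc_iff (hI (n + 1)).le).1 (hsucc n) |>.2

theorem uncountable_of_exists_isLUB [Nontrivial α]
    (hlub : ∀ S : Set α, S.Nonempty → BddAbove S → ∃ s, IsLUB S s) : Uncountable α := by
  refine not_countable_iff.1 fun _ => ?_
  obtain ⟨a, b, hab⟩ := exists_pair_lt α
  obtain ⟨e, he⟩ := exists_surjective_nat α
  obtain ⟨u, v, hu, hv, huv, havoid⟩ := exists_nested_Icc_avoiding hab e
  have hle : ∀ m n, u m ≤ v n := hu.forall_le_of_antitone hv fun n => (huv n).le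
  obtain ⟨s, hs⟩ := hlub (range u) (range_nonempty u) ⟨v 0, forall_mem_range.2 (hle · 0)⟩
  obtain ⟨n, rfl⟩ := he s
  exact havoid n ⟨hs.1 (mem_range_self _), hs.2 (forall_mem_range.2 (hle · (n + 1)))⟩

end DenselyOrdered

theorem exists_isLUB_subtype_Icc {L : Type*} [LinearOrder L] {x y : L}
    (hL : ∀ S : Set L, ∃ s, IsLUB S s) (S : Set (Icc x y)) (hS : S.Nonempty) :
    ∃ s, IsLUB S s := by
  obtain ⟨s, hs⟩ := hL (Subtype.val '' S)
  obtain ⟨z, hz⟩ := hS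
  have hxs : x ≤ s := z.2.1.trans (hs.1 (mem_image_of_mem _ hz))
  have hsy : s ≤ y := hs.2 (forall_mem_image.2 fun t _ => t.2.2)
  exact ⟨⟨s, hxs, hsy⟩, .of_image Subtype.coe_le_coe hs⟩

theorem statement_4 (L : Type*) [LinearOrder L] [Countable L] (h : CompleteLO L) :
    DenseJumps L := by
  intro x y hxy
  by_contra hjump
  push Not at hjump
  have : DenselyOrdered (Icc x y) :=
    ⟨fun a b hab => let ⟨c, hac, hcb⟩ := hjump a b a.2.1 hab b.2.2
      ⟨⟨c, a.2.1.trans hac.le, hcb.le.trans b.2.2⟩, hac, hcb⟩⟩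
  have : Nontrivial (Icc x y) :=
    ⟨⟨x, left_mem_Icc.2 hxy.le⟩, ⟨y, right_mem_Icc.2 hxy.le⟩, 
      fun h' => hxy.ne (congrArg Subtype.val h')⟩
  have : Uncountable (Icc x y) :=
    uncountable_of_exists_isLUB fun S hS _ => exists_isLUB_subtype_Icc (fun S => (h S).1) S hS
  exact not_countable (α := Icc x y) inferInstance
end

section
/- Let 𝓛 be a relational first-order language (no function or constant symbols) with at most countably many relation symbols, let M be a countably infinite ultrahomogeneous 𝓛-structure, and suppose P(M) ≠ {M}. Then every maximal chain ℒ in the poset ⟨P(M) ∪ {∅}, ⊆⟩, regarded as a linear order under ⊆, is ℝ-embeddable, complete, and its minimum ∅ is non-isolated in ℒ. -/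
open Set

open FirstOrder

/-! The heart of the matter is that the union of a nonempty chain of copies of `M` is again a copy.
A finite part of the union already lies in one copy, which is ultrahomogeneous like `M`; so `M`
and the union form extension pairs in both directions, and back-and-forth makes them isomorphic.
Consequently a maximal chain of `P(M) ∪ {∅}` is closed under arbitrary unions, hence complete, and
like every chain of subsets of a countable set it embeds into `ℝ`. Finally, if `g` is a
non-surjective self-embedding, every copy `f[M]` properly contains the copy `f[g[M]]`, and
maximality then places a member of the chain strictly between `∅` and any nonempty member. -/

open FirstOrder.Language Set

namespace FirstOrder.Language

variable {L : Language} {M N : Type*} [L.Structure M] [L.Structure N]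

theorem IsUltrahomogeneous.isExtensionPair_of_embedding (hM : L.IsUltrahomogeneous M)
    (j : N ↪[L] M) : L.IsExtensionPair N M := by
  rw [isExtensionPair_iff_exists_embedding_closure_singleton_sup]
  intro S hS f n
  exact hM.extend_embedding (S.fg_iff_structure_fg.1 hS) (h := ⟨j.comp (Substructure.subtype _)⟩)
    f _

theorem IsUltrahomogeneous.isExtensionPair_of_forall_fg_le_range (hM : L.IsUltrahomogeneous M)
    (hN : ∀ S : L.Substructure N, S.FG → ∃ e : M ↪[L] N, S ≤ e.toHom.range) :
    L.IsExtensionPair M N := by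
  rw [isExtensionPair_iff_exists_embedding_closure_singleton_sup]
  intro T hT f m
  obtain ⟨e, he⟩ := hN _ ((T.fg_iff_structure_fg.1 hT).range f.toHom)
  let g : T ↪[L] M := e.equivRange.symm.toEmbedding.comp
    (Embedding.codRestrict _ f fun x => he ⟨x, rfl⟩)
  obtain ⟨g', hg'⟩ := hM.extend_embedding (T.fg_iff_structure_fg.1 hT)
    (h := ⟨Substructure.subtype _⟩) g (Substructure.inclusion le_sup_right)
  refine ⟨e.comp g', ?_⟩
  ext x
  calc f x = e (g x) := by
        change f x = (e.equivRange (e.equivRange.symm ⟨f x, _⟩) : N)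
        rw [Equiv.apply_symm_apply]
    _ = _ := by rw [hg']; rfl

theorem IsUltrahomogeneous.exists_embedding_range_eq_sUnion [L.IsRelational] [Countable M]
    (hM : L.IsUltrahomogeneous M) {S : Set (Set M)} (hS : ∀ A ∈ S, ∃ f : M ↪[L] M, range f = A)
    (hchain : IsChain (· ⊆ ·) S) (hne : S.Nonempty) :
    ∃ f : M ↪[L] M, range f = ⋃₀ S := by
  let U := Substructure.closure L (⋃₀ S)
  have hU (x : M) : x ∈ U ↔ x ∈ ⋃₀ S := Substructure.mem_closure_iff_of_isRelational L _ x
  have hcover (T : L.Substructure U) (hT : T.FG) : ∃ e : M ↪[L] U, T ≤ e.toHom.range := by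
    have hTfin : (Subtype.val '' (T : Set U)).Finite :=
      have := hT.finite
      (T : Set U).toFinite.image _
    obtain ⟨A, hAS, hTA⟩ := hchain.directedOn.exists_mem_subset_of_finite_of_subset_sUnion hne
      hTfin (by rintro _ ⟨x, -, rfl⟩; exact (hU x).1 x.2)
    obtain ⟨fA, rfl⟩ := hS A hAS
    refine ⟨Embedding.codRestrict U fA fun x => (hU _).2 (subset_sUnion_of_mem hAS ⟨x, rfl⟩),
      fun x hx => ?_⟩
    obtain ⟨y, hy⟩ := hTA (mem_image_of_mem _ hx)
    exact ⟨y, Subtype.ext hy⟩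
  obtain ⟨e₀, -⟩ := hcover ⊥ Substructure.fg_bot
  obtain ⟨e, -⟩ := equiv_between_cg Structure.cg_of_countable Structure.cg_of_countable
    ⟨e₀.toPartialEquiv.domRestrict bot_le, Substructure.fg_bot⟩
    (hM.isExtensionPair_of_forall_fg_le_range hcover) (hM.isExtensionPair_of_embedding U.subtype)
  refine ⟨U.subtype.comp e.toEmbedding, Set.ext fun x => ⟨?_, fun hx => ?_⟩⟩
  · rintro ⟨y, rfl⟩
    exact (hU _).1 (e y).2
  · exact ⟨e.symm ⟨x, (hU x).2 hx⟩, by simp⟩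

theorem sUnion_mem_ranges_union_empty [L.IsRelational] [Countable M]
    (hM : L.IsUltrahomogeneous M) {T : Set (Set M)}
    (hT : T ⊆ {A | ∃ f : M ↪[L] M, range f = A} ∪ {∅}) (hchain : IsChain (· ⊆ ·) T) :
    ⋃₀ T ∈ {A | ∃ f : M ↪[L] M, range f = A} ∪ {∅} := by
  rw [← sUnion_sdiff_singleton_empty]
  rcases (T \ {∅}).eq_empty_or_nonempty with hT' | hT'
  · exact Or.inr (by simp [hT'])
  · exact Or.inl (hM.exists_embedding_range_eq_sUnion
      (fun A hA => (hT hA.1).resolve_right hA.2) (hchain.mono sdiff_subset) hT')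

theorem Embedding.range_comp_ssubset {P : Type*} [L.Structure P] (f : M ↪[L] N) {g : P ↪[L] M}
    (hg : range g ≠ univ) : range (f.comp g) ⊂ range f := by
  change range (f ∘ g) ⊂ range f
  rw [range_comp, ← image_univ (f := f)]
  exact f.injective.image_strictMono (ssubset_univ_iff.2 hg)

end FirstOrder.Language

theorem strictMono_tsum_indicator_geometric :
    StrictMono fun A : Set ℕ => ∑' n, A.indicator (fun n => (1 / 2 : ℝ) ^ n) n := by
  intro A B hAB
  obtain ⟨n, hnB, hnA⟩ := exists_of_ssubset hAB
  refine Summable.tsum_lt_tsum_of_nonneg (i := n)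
    (fun _ => indicator_nonneg (fun _ _ => by positivity) _)
    (fun _ => indicator_le_indicator_of_subset hAB.subset (fun _ => by positivity) _) ?_
    (summable_geometric_two.indicator _)
  simp [hnA, hnB]

theorem exists_strictMono_set_real (X : Type*) [Countable X] : ∃ f : Set X → ℝ, StrictMono f := by
  obtain ⟨e, he⟩ := countable_iff_exists_injective X |>.1 ‹_›
  exact ⟨_, strictMono_tsum_indicator_geometric.comp he.image_strictMono⟩

section SetFamily

variable {X : Type*} {F : Set (Set X)}

theorem exists_isLUB_of_sUnion_mem (hF : ∀ T ⊆ F, ⋃₀ T ∈ F) (s : Set F) : ∃ a, IsLUB s a := by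
  refine ⟨⟨_, hF _ (Subtype.coe_image_subset F s)⟩,
    fun A hA => subset_sUnion_of_mem (mem_image_of_mem _ hA), fun B hB => sUnion_subset ?_⟩
  rintro _ ⟨A, hA, rfl⟩
  exact hB hA

theorem exists_isGLB_of_sUnion_mem (hF : ∀ T ⊆ F, ⋃₀ T ∈ F) (s : Set F) : ∃ a, IsGLB s a :=
  (exists_isLUB_of_sUnion_mem hF (lowerBounds s)).imp fun _ => isLUB_lowerBounds.1

end SetFamily

namespace IsMaxChainIn

variable {X : Type*} {S C : Set (Set X)}

theorem mem_of_forall_comparable (hC : IsMaxChainIn S C) {B : Set X} (hB : B ∈ S)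
    (hcomp : ∀ D ∈ C, B ⊆ D ∨ D ⊆ B) : B ∈ C :=
  hC.2.2 (insert B C) (insert_subset hB hC.1) (hC.2.1.insert fun D hD _ => hcomp D hD)
    (subset_insert B C) ▸ mem_insert B C

theorem sUnion_mem (hC : IsMaxChainIn S C) (hS : ∀ T ⊆ S, IsChain (· ⊆ ·) T → ⋃₀ T ∈ S)
    {T : Set (Set X)} (hT : T ⊆ C) : ⋃₀ T ∈ C := by
  refine hC.mem_of_forall_comparable (hS T (hT.trans hC.1) (hC.2.1.mono hT)) fun D hD => ?_
  by_cases h : ∀ A ∈ T, A ⊆ D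
  · exact Or.inl (sUnion_subset h)
  · push Not at h
    obtain ⟨A, hAT, hAD⟩ := h
    exact Or.inr (((hC.2.1.total (hT hAT) hD).resolve_left hAD).trans (subset_sUnion_of_mem hAT))

theorem exists_nonempty_ssubset (hC : IsMaxChainIn S C) {A B : Set X} (hA : A ∈ C) (hB : B ∈ S)
    (hBne : B.Nonempty) (hBA : B ⊂ A) : ∃ D ∈ C, D.Nonempty ∧ D ⊂ A := by
  by_contra! h
  refine h B (hC.mem_of_forall_comparable hB fun D hD => ?_) hBne hBA
  rcases D.eq_empty_or_nonempty with rfl | hDne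
  · exact Or.inr (empty_subset B)
  have hAD : A ⊆ D := (hC.2.1.total hD hA).elim
    (fun hDA => not_not.1 fun hAD => h D hD hDne ⟨hDA, hAD⟩) id
  exact Or.inl (hBA.subset.trans hAD)

end IsMaxChainIn

theorem statement_6_general (𝓛 : FirstOrder.Language) (hfun : ∀ n, IsEmpty (𝓛.Functions n))
    (M : Type*) [𝓛.Structure M] [Countable M]
    (hultra : 𝓛.IsUltrahomogeneous M)
    (hne : {A : Set M | ∃ f : M ↪[𝓛] M, Set.range f = A} ≠ {Set.univ})
    (C : Set (Set M))
    (hmax : IsMaxChainIn ({A : Set M | ∃ f : M ↪[𝓛] M, Set.range f = A} ∪ {∅}) C) :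
    (∃ f : ↥C → ℝ, StrictMono f) ∧
    (∀ S : Set ↥C, (∃ a, IsLUB S a) ∧ (∃ b, IsGLB S b)) ∧
    (∅ : Set M) ∈ C ∧
    (∀ A ∈ C, (∅ : Set M) ⊂ A → ∃ B ∈ C, (∅ : Set M) ⊂ B ∧ B ⊂ A) := by
  have : 𝓛.IsRelational := hfun
  have hunion : ∀ T ⊆ C, ⋃₀ T ∈ C :=
    fun T => hmax.sUnion_mem fun _ => sUnion_mem_ranges_union_empty hultra
  obtain ⟨f, hf⟩ := exists_strictMono_set_real M
  refine ⟨⟨f ∘ Subtype.val, hf.comp (Subtype.strictMono_coe _)⟩,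
    fun S => ⟨exists_isLUB_of_sUnion_mem hunion S, exists_isGLB_of_sUnion_mem hunion S⟩,
    sUnion_empty ▸ hunion ∅ (empty_subset C), fun A hA hA0 => ?_⟩
  obtain ⟨fA, rfl⟩ := (hmax.1 hA).resolve_right hA0.ne'
  obtain ⟨f₀, hf₀⟩ : ∃ f₀ : M ↪[𝓛] M, range f₀ ≠ univ := by
    by_contra! h
    exact hne (eq_singleton_iff_unique_mem.2 ⟨⟨Embedding.refl 𝓛 M, range_id⟩,
      fun _ ⟨f, hf⟩ => hf ▸ h f⟩)
  have : Nonempty M := range_nonempty_iff_nonempty.1 (empty_ssubset.1 hA0)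
  obtain ⟨B, hBC, hB, hBA⟩ := hmax.exists_nonempty_ssubset hA (Or.inl ⟨fA.comp f₀, rfl⟩)
    (range_nonempty _) (fA.range_comp_ssubset hf₀)
  exact ⟨B, hBC, empty_ssubset.2 hB, hBA⟩

theorem statement_6 (𝓛 : FirstOrder.Language) (hfun : ∀ n, IsEmpty (𝓛.Functions n))
    (hcount : Countable (Σ n, 𝓛.Relations n))
    (M : Type*) [𝓛.Structure M] [Countable M] [Infinite M]
    (hultra : 𝓛.IsUltrahomogeneous M)
    (hne : {A : Set M | ∃ f : M ↪[𝓛] M, Set.range f = A} ≠ {Set.univ})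
    (C : Set (Set M))
    (hmax : IsMaxChainIn ({A : Set M | ∃ f : M ↪[𝓛] M, Set.range f = A} ∪ {∅}) C) :
    (∃ f : ↥C → ℝ, StrictMono f) ∧
    (∀ S : Set ↥C, (∃ a, IsLUB S a) ∧ (∃ b, IsGLB S b)) ∧
    (∅ : Set M) ∈ C ∧
    (∀ A ∈ C, (∅ : Set M) ⊂ A → ∃ B ∈ C, (∅ : Set M) ⊂ B ∧ B ⊂ A) :=
  statement_6_general 𝓛 hfun M hultra hne C hmax
end

section
/- Let ⟨D,<⟩ be a countable random poset. Then for every triple ⟨L,G,U⟩ ∈ C(D), the set D_{⟨L,G,U⟩}, equipped with the order induced from D, is order-isomorphic to ⟨D,<⟩; in particular D_{⟨L,G,U⟩} is infinite. -/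
open Set

/-!
The witnesses of an admissible triple `⟨L,G,U⟩` again form a random poset: a triple
`⟨L',G',U'⟩` of witnesses is realized inside the witness set by any realizer in `D` of
`⟨L ∪ L', G ∪ G', U ∪ U'⟩`, which is admissible because `L'`, `G'`, `U'` consist of witnesses.
A random poset is infinite, and any two countable random posets are isomorphic by the
back-and-forth method: the extension property lets a finite partial isomorphism be extended to
any prescribed point of either side.
-/

section Witnesses

variable {X Y : Type*} (r : X → X → Prop)

/-- `⟨L,G,U⟩ ∈ C(X)`. -/
def IsAdmissibleTriple (L G U : Finset X) : Prop :=
  Disjoint L G ∧ Disjoint L U ∧ Disjoint G U ∧ (∀ l ∈ L, ∀ g ∈ G, r l g) ∧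
    (∀ u ∈ U, ∀ l ∈ L, ¬ r u l) ∧ ∀ u ∈ U, ∀ g ∈ G, ¬ r g u

/-- `p ∈ X_{⟨L,G,U⟩}`. -/
def IsWitness (L G U : Finset X) (p : X) : Prop :=
  p ∉ L ∧ p ∉ G ∧ p ∉ U ∧ (∀ l ∈ L, r l p) ∧ (∀ g ∈ G, r p g) ∧
    ∀ u ∈ U, p ≠ u ∧ ¬ r p u ∧ ¬ r u p

variable {r}

theorem isRandomPosetRel_iff : IsRandomPosetRel r ↔ (∀ x, ¬ r x x) ∧
    (∀ x y z, r x y → r y z → r x z) ∧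
    ∀ L G U, IsAdmissibleTriple r L G U → ∃ p, IsWitness r L G U p := by
  simp only [IsRandomPosetRel, IsAdmissibleTriple, IsWitness, and_imp]

theorem IsRandomPosetRel.asymm (h : IsRandomPosetRel r) {a b : X} (hab : r a b) : ¬ r b a :=
  fun hba => h.1 a (h.2.1 a b a hab hba)

theorem IsRandomPosetRel.infinite (h : IsRandomPosetRel r) : Infinite X := by
  refine Infinite.of_not_fintype fun _ => ?_
  obtain ⟨p, -, -, hp, -⟩ :=
    h.2.2 ∅ ∅ Finset.univ (by simp) (by simp) (by simp) (by simp) (by simp) (by simp)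
  exact hp (Finset.mem_univ p)

theorem IsRandomPosetRel.exists_realize {ι : Type*} [Finite ι] {s : Y → Y → Prop}
    (hs : IsRandomPosetRel s) (d : ι → Y) (below above : ι → Prop)
    (hd : ∀ i j, d i = d j → (below i ↔ below j) ∧ (above i ↔ above j))
    (hlt : ∀ i j, below i → above j → s (d i) (d j))
    (hbelow : ∀ i j, below j → s (d i) (d j) → below i)
    (habove : ∀ i j, above i → s (d i) (d j) → above j) :
    ∃ y, ∀ i, y ≠ d i ∧ (s (d i) y ↔ below i) ∧ (s y (d i) ↔ above i) := by
  classical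
  have := Fintype.ofFinite ι
  have hadm : IsAdmissibleTriple s ((Finset.univ.filter below).image d)
      ((Finset.univ.filter above).image d)
      ((Finset.univ.filter fun i => ¬ below i ∧ ¬ above i).image d) := by
    simp only [IsAdmissibleTriple, Finset.disjoint_iff_ne, Finset.forall_mem_image,
      Finset.mem_filter, Finset.mem_univ, true_and]
    refine ⟨fun i hi j hj hij => hs.1 _ (hij ▸ hlt i j hi hj),
      fun i hi j hj hij => hj.1 ((hd i j hij).1.1 hi),
      fun i hi j hj hij => hj.2 ((hd i j hij).2.1 hi),
      fun i hi j hj => hlt i j hi hj,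
      fun j hj i hi hji => hj.1 (hbelow j i hi hji),
      fun j hj i hi hij => hj.2 (habove i j hi hij)⟩
  obtain ⟨y, -, -, -, hL, hG, hU⟩ := (isRandomPosetRel_iff.1 hs).2.2 _ _ _ hadm
  simp only [Finset.forall_mem_image, Finset.mem_filter, Finset.mem_univ, true_and] at hL hG hU
  refine ⟨y, fun i => ?_⟩
  by_cases hbi : below i
  · have hiy := hL hbi
    refine ⟨fun h => hs.1 y (h ▸ hiy), iff_of_true hiy hbi,
      iff_of_false (hs.asymm hiy) fun hai => hs.asymm hiy (hG hai)⟩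
  by_cases hai : above i
  · have hyi := hG hai
    exact ⟨fun h => hs.1 y (h ▸ hyi), iff_of_false (hs.asymm hyi) hbi, iff_of_true hyi hai⟩
  obtain ⟨hne, hyi, hiy⟩ := hU ⟨hbi, hai⟩
  exact ⟨hne, iff_of_false hiy hbi, iff_of_false hyi hai⟩

theorem isWitness_union [DecidableEq X] {L G U L' G' U' : Finset X} {p : X} :
    IsWitness r (L ∪ L') (G ∪ G') (U ∪ U') p ↔ IsWitness r L G U p ∧ IsWitness r L' G' U' p := by
  simp only [IsWitness, Finset.mem_union, not_or, or_imp, forall_and]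
  tauto

theorem IsAdmissibleTriple.union [DecidableEq X] (hasymm : ∀ a b, r a b → ¬ r b a)
    {L G U L' G' U' : Finset X} (h : IsAdmissibleTriple r L G U)
    (h' : IsAdmissibleTriple r L' G' U') (hL' : ∀ x ∈ L', IsWitness r L G U x)
    (hG' : ∀ x ∈ G', IsWitness r L G U x) (hU' : ∀ x ∈ U', IsWitness r L G U x) :
    IsAdmissibleTriple r (L ∪ L') (G ∪ G') (U ∪ U') := by
  simp only [IsAdmissibleTriple, Finset.disjoint_union_left, Finset.disjoint_union_right,
    Finset.forall_mem_union] at h h' ⊢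
  simp only [IsWitness] at hL' hG' hU'
  grind [Finset.disjoint_left]

theorem isAdmissibleTriple_map {s : Y → Y → Prop} (f : s ↪r r) {L G U : Finset Y} :
    IsAdmissibleTriple r (L.map f.toEmbedding) (G.map f.toEmbedding) (U.map f.toEmbedding) ↔
      IsAdmissibleTriple s L G U := by
  simp [IsAdmissibleTriple, f.map_rel_iff]

theorem isWitness_map {s : Y → Y → Prop} (f : s ↪r r) {L G U : Finset Y} {p : Y} :
    IsWitness r (L.map f.toEmbedding) (G.map f.toEmbedding) (U.map f.toEmbedding) (f p) ↔
      IsWitness s L G U p := by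
  simp [IsWitness, f.map_rel_iff]

theorem IsRandomPosetRel.subrel_witnesses (h : IsRandomPosetRel r) {L G U : Finset X}
    (hadm : IsAdmissibleTriple r L G U) :
    IsRandomPosetRel (Subrel r (· ∈ {p | IsWitness r L G U p})) := by
  classical
  let f := Subrel.relEmbedding r (· ∈ {p | IsWitness r L G U p})
  have hasymm : ∀ a b, r a b → ¬ r b a := fun _ _ => h.asymm
  rw [isRandomPosetRel_iff] at h ⊢
  refine ⟨fun x => h.1 x, fun x y z => h.2.1 x y z, fun L' G' U' hadm' => ?_⟩
  rw [← isAdmissibleTriple_map f] at hadm'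
  have hmem : ∀ S : Finset _, ∀ x ∈ S.map f.toEmbedding, IsWitness r L G U x :=
    fun S => Finset.forall_mem_map.2 fun a _ => a.2
  obtain ⟨p, hp⟩ := h.2.2 _ _ _ (hadm.union hasymm hadm' (hmem L') (hmem G') (hmem U'))
  rw [isWitness_union] at hp
  exact ⟨⟨p, hp.1⟩, (isWitness_map f).1 hp.2⟩

theorem isCopy_of_relIsoRel_subrel {W : Set X} (h : RelIsoRel r (Subrel r (· ∈ W))) :
    IsCopy r W := by
  obtain ⟨e, he⟩ := h
  exact ⟨Subtype.val ∘ e, Subtype.val_injective.comp e.injective,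
    by rw [e.surjective.range_comp, Subtype.range_coe], he⟩

end Witnesses

section BackAndForth

variable {X Y : Type*} (r : X → X → Prop) (s : Y → Y → Prop)

def IsPartialRelIso (p : Set (X × Y)) : Prop :=
  ∀ a ∈ p, ∀ b ∈ p, (a.1 = b.1 ↔ a.2 = b.2) ∧ (r a.1 b.1 ↔ s a.2 b.2)

variable {r s}

theorem isPartialRelIso_image_swap {p : Set (X × Y)} :
    IsPartialRelIso s r (Prod.swap '' p) ↔ IsPartialRelIso r s p := by
  simp only [IsPartialRelIso, Set.forall_mem_image, Prod.fst_swap, Prod.snd_swap]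
  exact forall₂_congr fun a _ => forall₂_congr fun b _ => and_congr Iff.comm Iff.comm

theorem isPartialRelIso_insert (hr : ∀ x, ¬ r x x) (hs : ∀ y, ¬ s y y) {p : Set (X × Y)}
    (hp : IsPartialRelIso r s p) {a : X × Y}
    (ha : ∀ b ∈ p, (a.1 = b.1 ↔ a.2 = b.2) ∧ (r a.1 b.1 ↔ s a.2 b.2) ∧ (r b.1 a.1 ↔ s b.2 a.2)) :
    IsPartialRelIso r s (insert a p) := by
  rintro b (rfl | hb) c (rfl | hc)
  · exact ⟨iff_of_true rfl rfl, iff_of_false (hr _) (hs _)⟩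
  · exact ⟨(ha c hc).1, (ha c hc).2.1⟩
  · exact ⟨eq_comm.trans ((ha b hb).1.trans eq_comm), (ha b hb).2.2⟩
  · exact hp b hb c hc

theorem IsPartialRelIso.exists_insert_left (hr : IsRandomPosetRel r) (hs : IsRandomPosetRel s)
    {p : Set (X × Y)} (hp : IsPartialRelIso r s p) (hfin : p.Finite) (x : X) :
    ∃ y, IsPartialRelIso r s (insert (x, y) p) := by
  by_cases hx : ∃ y, (x, y) ∈ p
  · obtain ⟨y, hy⟩ := hx
    exact ⟨y, by rwa [Set.insert_eq_of_mem hy]⟩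
  have := hfin.to_subtype
  obtain ⟨y, hy⟩ := hs.exists_realize (fun q : p => q.1.2)
    (fun q => r q.1.1 x) (fun q => r x q.1.1)
    (fun ⟨a, ha⟩ ⟨b, hb⟩ hab => by simp only [(hp a ha b hb).1.2 hab, and_self])
    (fun ⟨a, ha⟩ ⟨b, hb⟩ hax hxb => (hp a ha b hb).2.1 (hr.2.1 _ _ _ hax hxb))
    (fun ⟨a, ha⟩ ⟨b, hb⟩ hbx hab => hr.2.1 _ _ _ ((hp a ha b hb).2.2 hab) hbx)
    (fun ⟨a, ha⟩ ⟨b, hb⟩ hxa hab => hr.2.1 _ _ _ hxa ((hp a ha b hb).2.2 hab))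
  refine ⟨y, isPartialRelIso_insert hr.1 hs.1 hp fun b hb => ?_⟩
  obtain ⟨hne, hbelow, habove⟩ := hy ⟨b, hb⟩
  have hxb : x ≠ b.1 := fun h => hx ⟨b.2, h ▸ hb⟩
  exact ⟨iff_of_false hxb hne, habove.symm, hbelow.symm⟩

theorem IsPartialRelIso.exists_insert_right (hr : IsRandomPosetRel r) (hs : IsRandomPosetRel s)
    {p : Set (X × Y)} (hp : IsPartialRelIso r s p) (hfin : p.Finite) (y : Y) :
    ∃ x, IsPartialRelIso r s (insert (x, y) p) := by
  obtain ⟨x, hx⟩ :=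
    (isPartialRelIso_image_swap.2 hp).exists_insert_left hs hr (hfin.image _) y
  refine ⟨x, isPartialRelIso_image_swap.1 ?_⟩
  rwa [Set.image_insert_eq]

theorem IsPartialRelIso.relIsoRel {R : Set (X × Y)} (h : IsPartialRelIso r s R)
    (hdom : ∀ x, ∃ y, (x, y) ∈ R) (hrange : ∀ y, ∃ x, (x, y) ∈ R) : RelIsoRel r s := by
  choose f hf using hdom
  refine ⟨Equiv.ofBijective f ⟨fun a b hab => (h _ (hf a) _ (hf b)).1.2 hab, fun y => ?_⟩,
    fun a b => (h _ (hf a) _ (hf b)).2⟩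
  obtain ⟨x, hx⟩ := hrange y
  exact ⟨x, (h _ (hf x) _ hx).1.1 rfl⟩

theorem relIsoRel_of_isRandomPosetRel [Countable X] [Countable Y] (hr : IsRandomPosetRel r)
    (hs : IsRandomPosetRel s) : RelIsoRel r s := by
  cases nonempty_encodable X
  cases nonempty_encodable Y
  let P := {p : Set (X × Y) // p.Finite ∧ IsPartialRelIso r s p}
  let definedAt : X ⊕ Y → Order.Cofinal P := Sum.elim
    (fun x => ⟨{p | ∃ y, (x, y) ∈ p.1}, fun p => by
      obtain ⟨y, hy⟩ := p.2.2.exists_insert_left hr hs p.2.1 x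
      exact ⟨⟨_, p.2.1.insert _, hy⟩, ⟨y, Set.mem_insert _ _⟩, Set.subset_insert _ _⟩⟩)
    (fun y => ⟨{p | ∃ x, (x, y) ∈ p.1}, fun p => by
      obtain ⟨x, hx⟩ := p.2.2.exists_insert_right hr hs p.2.1 y
      exact ⟨⟨_, p.2.1.insert _, hx⟩, ⟨x, Set.mem_insert _ _⟩, Set.subset_insert _ _⟩⟩)
  -- A generic ideal of finite partial isomorphisms (Rasiowa–Sikorski); its union is the graph.
  let I := Order.idealOfCofinals ⟨∅, Set.finite_empty, fun _ h => h.elim⟩ definedAt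
  refine IsPartialRelIso.relIsoRel (R := ⋃ p ∈ I, p.1) ?_ (fun x => ?_) (fun y => ?_)
  · intro a ha b hb
    obtain ⟨p, hp, ha⟩ := Set.mem_iUnion₂.1 ha
    obtain ⟨q, hq, hb⟩ := Set.mem_iUnion₂.1 hb
    obtain ⟨m, -, hpm, hqm⟩ := I.directed p hp q hq
    exact m.2.2 a (hpm ha) b (hqm hb)
  · obtain ⟨p, ⟨y, hy⟩, hp⟩ := Order.cofinal_meets_idealOfCofinals _ definedAt (.inl x)
    exact ⟨y, Set.mem_biUnion hp hy⟩
  · obtain ⟨p, ⟨x, hx⟩, hp⟩ := Order.cofinal_meets_idealOfCofinals _ definedAt (.inr y)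
    exact ⟨x, Set.mem_biUnion hp hx⟩

end BackAndForth

theorem statement_8_general {D : Type*} [Countable D] (r : D → D → Prop)
    (hrp : IsRandomPosetRel r)
    (L G U : Finset D) (hLG : Disjoint L G) (hLU : Disjoint L U) (hGU : Disjoint G U)
    (hC1 : ∀ l ∈ L, ∀ g ∈ G, r l g)
    (hC2 : ∀ u ∈ U, ∀ l ∈ L, ¬ r u l)
    (hC3 : ∀ u ∈ U, ∀ g ∈ G, ¬ r g u)
    (W : Set D)
    (hW : W = {p : D | p ∉ L ∧ p ∉ G ∧ p ∉ U ∧ (∀ l ∈ L, r l p) ∧ (∀ g ∈ G, r p g) ∧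
      ∀ u ∈ U, p ≠ u ∧ ¬ r p u ∧ ¬ r u p}) :
    IsCopy r W ∧ W.Infinite := by
  subst hW
  have hW : IsRandomPosetRel (Subrel r (· ∈ {p | IsWitness r L G U p})) :=
    hrp.subrel_witnesses ⟨hLG, hLU, hGU, hC1, hC2, hC3⟩
  exact ⟨isCopy_of_relIsoRel_subrel (relIsoRel_of_isRandomPosetRel hrp hW),
    Set.infinite_coe_iff.1 hW.infinite⟩

theorem statement_8 {D : Type*} [Countable D] [Infinite D] (r : D → D → Prop)
    (hrp : IsRandomPosetRel r)
    (L G U : Finset D) (hLG : Disjoint L G) (hLU : Disjoint L U) (hGU : Disjoint G U)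
    (hC1 : ∀ l ∈ L, ∀ g ∈ G, r l g)
    (hC2 : ∀ u ∈ U, ∀ l ∈ L, ¬ r u l)
    (hC3 : ∀ u ∈ U, ∀ g ∈ G, ¬ r g u)
    (W : Set D)
    (hW : W = {p : D | p ∉ L ∧ p ∉ G ∧ p ∉ U ∧ (∀ l ∈ L, r l p) ∧ (∀ g ∈ G, r p g) ∧
      ∀ u ∈ U, p ≠ u ∧ ¬ r p u ∧ ¬ r u p}) :
    IsCopy r W ∧ W.Infinite :=
  statement_8_general r hrp L G U hLG hLU hGU hC1 hC2 hC3 W hW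
end

section
/- Let ⟨D,<⟩ be a countable random poset. Then for every finite set F ⊆ D, the set D \ F, equipped with the order induced from D, is order-isomorphic to ⟨D,<⟩. -/
open Set

/-!
A back-and-forth argument shows that any two countable random posets are isomorphic: a finite
partial isomorphism can always be extended by one point on either side, because the extension
property realises over the range (or domain) exactly the order type of the new point. Removing
finitely many points from a random poset leaves a random poset, since every instance of the
extension property has infinitely many witnesses. Hence `D \ F ≅ D`.
-/

namespace IsRandomPosetRel

variable {D : Type*} {r : D → D → Prop}

theorem isStrictOrder (hr : IsRandomPosetRel r) : IsStrictOrder D r where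
  irrefl := hr.1
  trans := hr.2.1

theorem exists_realize_s9 (hr : IsRandomPosetRel r) (T : Finset D) (lo hi : D → Prop)
    (h_lo_hi : ∀ l ∈ T, ∀ g ∈ T, lo l → hi g → r l g)
    (h_lo : ∀ u ∈ T, ∀ l ∈ T, lo l → r u l → lo u)
    (h_hi : ∀ g ∈ T, ∀ u ∈ T, hi g → r g u → hi u) :
    ∃ p ∉ T, ∀ t ∈ T, (r t p ↔ lo t) ∧ (r p t ↔ hi t) := by
  classical
  have h_excl : ∀ t ∈ T, lo t → ¬ hi t := fun t ht hl hh => hr.1 t (h_lo_hi t ht t ht hl hh)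
  obtain ⟨p, hpL, hpG, hpU, hLp, hpG', hUp⟩ := hr.2.2 (T.filter lo) (T.filter hi)
    (T.filter fun t => ¬ lo t ∧ ¬ hi t)
    (Finset.disjoint_filter.2 h_excl) (Finset.disjoint_filter.2 fun _ _ hl h => h.1 hl)
    (Finset.disjoint_filter.2 fun _ _ hh h => h.2 hh)
    (by simp only [Finset.mem_filter]; exact fun l hl g hg => h_lo_hi l hl.1 g hg.1 hl.2 hg.2)
    (by simp only [Finset.mem_filter]; exact fun u hu l hl h => hu.2.1 (h_lo u hu.1 l hl.1 hl.2 h))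
    (by simp only [Finset.mem_filter]; exact fun u hu g hg h => hu.2.2 (h_hi g hg.1 u hu.1 hg.2 h))
  simp only [Finset.mem_filter] at hpL hpG hpU hLp hpG' hUp
  refine ⟨p, fun hp => hpU ⟨hp, fun hl => hpL ⟨hp, hl⟩, fun hh => hpG ⟨hp, hh⟩⟩, fun t ht => ?_⟩
  by_cases hl : lo t
  · exact ⟨iff_of_true (hLp t ⟨ht, hl⟩) hl,
      iff_of_false (fun h => hr.1 p (hr.2.1 _ _ _ h (hLp t ⟨ht, hl⟩))) (h_excl t ht hl)⟩
  by_cases hh : hi t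
  · exact ⟨iff_of_false (fun h => hr.1 p (hr.2.1 _ _ _ (hpG' t ⟨ht, hh⟩) h)) hl,
      iff_of_true (hpG' t ⟨ht, hh⟩) hh⟩
  obtain ⟨-, hpt, htp⟩ := hUp t ⟨ht, hl, hh⟩
  exact ⟨iff_of_false htp hl, iff_of_false hpt hh⟩

/-- Witnesses already found can be added to `U`, so a new one always exists. -/
theorem infinite_witnesses (hr : IsRandomPosetRel r) (L G U : Finset D)
    (hLG : Disjoint L G) (hLU : Disjoint L U) (hGU : Disjoint G U)
    (hlg : ∀ l ∈ L, ∀ g ∈ G, r l g) (hul : ∀ u ∈ U, ∀ l ∈ L, ¬ r u l)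
    (hgu : ∀ u ∈ U, ∀ g ∈ G, ¬ r g u) :
    {p | p ∉ L ∧ p ∉ G ∧ p ∉ U ∧ (∀ l ∈ L, r l p) ∧ (∀ g ∈ G, r p g) ∧
      ∀ u ∈ U, p ≠ u ∧ ¬ r p u ∧ ¬ r u p}.Infinite := by
  classical
  intro hW
  set W := hW.toFinset
  have hmemW : ∀ {w}, w ∈ W → _ := fun hw => hW.mem_toFinset.1 hw
  obtain ⟨p, hpL, hpG, hpU, hLp, hpG', hUp⟩ := hr.2.2 L G (U ∪ W) hLG
    (Finset.disjoint_union_right.2 ⟨hLU, Finset.disjoint_left.2 fun _ hl hw => (hmemW hw).1 hl⟩)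
    (Finset.disjoint_union_right.2 ⟨hGU, Finset.disjoint_left.2 fun _ hg hw => (hmemW hw).2.1 hg⟩)
    hlg
    (fun u hu l hl h => (Finset.mem_union.1 hu).elim (fun hu => hul u hu l hl h)
      fun hw => hr.1 u (hr.2.1 _ _ _ h ((hmemW hw).2.2.2.1 l hl)))
    (fun u hu g hg h => (Finset.mem_union.1 hu).elim (fun hu => hgu u hu g hg h)
      fun hw => hr.1 g (hr.2.1 _ _ _ h ((hmemW hw).2.2.2.2.1 g hg)))
  have hpW : p ∈ W := hW.mem_toFinset.2 ⟨hpL, hpG, fun h => hpU (Finset.mem_union_left _ h),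
    hLp, hpG', fun u hu => hUp u (Finset.mem_union_left _ hu)⟩
  exact (hUp p (Finset.mem_union_right _ hpW)).1 rfl

theorem restrict (hr : IsRandomPosetRel r) {A : Set D} (hA : Aᶜ.Finite) :
    IsRandomPosetRel fun a b : A => r a b := by
  classical
  refine ⟨fun a => hr.1 a, fun a b c => hr.2.1 a b c, fun L G U hLG hLU hGU hlg hul hgu => ?_⟩
  let ι := Function.Embedding.subtype (· ∈ A)
  have hW := hr.infinite_witnesses (L.map ι) (G.map ι) (U.map ι) ((Finset.disjoint_map ι).2 hLG)
    ((Finset.disjoint_map ι).2 hLU) ((Finset.disjoint_map ι).2 hGU)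
    (by simpa only [Finset.forall_mem_map, ι, Function.Embedding.subtype_apply] using hlg)
    (by simpa only [Finset.forall_mem_map, ι, Function.Embedding.subtype_apply] using hul)
    (by simpa only [Finset.forall_mem_map, ι, Function.Embedding.subtype_apply] using hgu)
  obtain ⟨p, ⟨hpL, hpG, hpU, hLp, hpG', hUp⟩, hpA⟩ := hW.exists_notMem_finset hA.toFinset
  have hpA : p ∈ A := by simpa using hpA
  simp only [Finset.forall_mem_map, ι, Function.Embedding.subtype_apply] at hLp hpG' hUp
  refine ⟨⟨p, hpA⟩, fun h => hpL ?_, fun h => hpG ?_, fun h => hpU ?_, hLp, hpG',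
    fun u hu => ⟨fun h => (hUp u hu).1 (congrArg Subtype.val h), (hUp u hu).2⟩⟩ <;>
  exact (Finset.mem_map' ι).2 h

end IsRandomPosetRel

section PartialIso

variable {α β : Type*} {r : α → α → Prop} {s : β → β → Prop}

variable (r s) in
def IsPartialIso (S : Set (α × β)) : Prop :=
  ∀ p ∈ S, ∀ q ∈ S, (p.1 = q.1 ↔ p.2 = q.2) ∧ (r p.1 q.1 ↔ s p.2 q.2)

namespace IsPartialIso

variable {S : Set (α × β)}

theorem empty : IsPartialIso r s ∅ := fun _ h => h.elim

theorem swap (hS : IsPartialIso r s S) : IsPartialIso s r (Prod.swap ⁻¹' S) :=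
  fun _ hp _ hq => ⟨(hS _ hp _ hq).1.symm, (hS _ hp _ hq).2.symm⟩

theorem iUnion {ι : Type*} {S : ι → Set (α × β)} (hS : ∀ i, IsPartialIso r s (S i))
    (hdir : Directed (· ⊆ ·) S) : IsPartialIso r s (⋃ i, S i) := by
  intro p hp q hq
  obtain ⟨i, hp⟩ := mem_iUnion.1 hp
  obtain ⟨j, hq⟩ := mem_iUnion.1 hq
  obtain ⟨k, hik, hjk⟩ := hdir i j
  exact hS k p (hik hp) q (hjk hq)

theorem extend (hS : IsPartialIso r s S) {a : α} {b : β} (hab : r a a ↔ s b b)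
    (h : ∀ q ∈ S, (q.1 = a ↔ q.2 = b) ∧ (r q.1 a ↔ s q.2 b) ∧ (r a q.1 ↔ s b q.2)) :
    IsPartialIso r s (insert (a, b) S) := by
  rintro p (rfl | hp) q (rfl | hq)
  · exact ⟨iff_of_true rfl rfl, hab⟩
  · exact ⟨eq_comm.trans ((h q hq).1.trans eq_comm), (h q hq).2.2⟩
  · exact ⟨(h p hp).1, (h p hp).2.1⟩
  · exact hS p hp q hq

/-- Forth step: the new point realises, over the range of `S`, the order type of `a` over its
domain. -/
theorem exists_insert_left [IsStrictOrder α r] (hs : IsRandomPosetRel s)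
    (hS : IsPartialIso r s S) (hfin : S.Finite) (a : α) :
    ∃ b, IsPartialIso r s (insert (a, b) S) := by
  by_cases ha : ∃ b, (a, b) ∈ S
  · obtain ⟨b, hb⟩ := ha
    exact ⟨b, by rwa [Set.insert_eq_of_mem hb]⟩
  push Not at ha
  have hT : ∀ t, t ∈ (hfin.image Prod.snd).toFinset ↔ ∃ q ∈ S, q.2 = t := by simp
  obtain ⟨b, hbT, hb⟩ := hs.exists_realize_s9 (hfin.image Prod.snd).toFinset
    (fun t => ∃ q ∈ S, q.2 = t ∧ r q.1 a) (fun t => ∃ q ∈ S, q.2 = t ∧ r a q.1)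
    (by
      rintro - - - - ⟨q, hq, rfl, hqa⟩ ⟨q', hq', rfl, haq'⟩
      exact (hS q hq q' hq').2.1 (_root_.trans hqa haq'))
    (by
      rintro u hu - - ⟨q', hq', rfl, hq'a⟩ hr
      obtain ⟨q, hq, rfl⟩ := (hT _).1 hu
      exact ⟨q, hq, rfl, _root_.trans ((hS q hq q' hq').2.2 hr) hq'a⟩)
    (by
      rintro - - u hu ⟨q', hq', rfl, haq'⟩ hr
      obtain ⟨q, hq, rfl⟩ := (hT _).1 hu
      exact ⟨q, hq, rfl, _root_.trans haq' ((hS q' hq' q hq).2.2 hr)⟩)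
  have hbS : ∀ q ∈ S, q.2 ≠ b := fun q hq h => hbT ((hT b).2 ⟨q, hq, h⟩)
  refine ⟨b, hS.extend (iff_of_false (irrefl a) (hs.1 b)) fun q hq => ?_⟩
  have hq_same : ∀ q' ∈ S, q'.2 = q.2 → q'.1 = q.1 := fun q' hq' h => (hS q' hq' q hq).1.2 h
  obtain ⟨hlo, hhi⟩ := hb q.2 ((hT _).2 ⟨q, hq, rfl⟩)
  refine ⟨iff_of_false (fun h => ha q.2 (h ▸ hq)) (hbS q hq), ?_, ?_⟩
  · rw [hlo]
    exact ⟨fun h => ⟨q, hq, rfl, h⟩, fun ⟨q', hq', h, h'⟩ => hq_same q' hq' h ▸ h'⟩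
  · rw [hhi]
    exact ⟨fun h => ⟨q, hq, rfl, h⟩, fun ⟨q', hq', h, h'⟩ => hq_same q' hq' h ▸ h'⟩

theorem exists_insert_right [IsStrictOrder β s] (hr : IsRandomPosetRel r)
    (hS : IsPartialIso r s S) (hfin : S.Finite) (b : β) :
    ∃ a, IsPartialIso r s (insert (a, b) S) := by
  obtain ⟨a, ha⟩ := hS.swap.exists_insert_left hr (hfin.preimage Prod.swap_injective.injOn) b
  refine ⟨a, ?_⟩
  convert ha.swap using 1
  ext ⟨x, y⟩
  simp [and_comm]

theorem relIsoRel (hS : IsPartialIso r s S) (hdom : ∀ a, ∃ b, (a, b) ∈ S)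
    (hcod : ∀ b, ∃ a, (a, b) ∈ S) : RelIsoRel r s := by
  choose f hf using hdom
  choose g hg using hcod
  refine ⟨⟨f, g, fun a => ?_, fun b => ?_⟩, fun x y => (hS _ (hf x) _ (hf y)).2⟩
  · exact (hS _ (hg (f a)) _ (hf a)).1.2 rfl
  · exact (hS _ (hf (g b)) _ (hg b)).1.1 rfl

end IsPartialIso

end PartialIso

namespace IsRandomPosetRel

variable {α β : Type*} {r : α → α → Prop} {s : β → β → Prop}

theorem relIsoRel [Countable α] [Countable β] (hr : IsRandomPosetRel r)
    (hs : IsRandomPosetRel s) : RelIsoRel r s := by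
  have := hr.isStrictOrder
  have := hs.isStrictOrder
  let _ : Encodable (α ⊕ β) := Encodable.ofCountable _
  let FinPartialIso := {S : Set (α × β) // S.Finite ∧ IsPartialIso r s S}
  let cofinal : α ⊕ β → Order.Cofinal FinPartialIso := Sum.elim
    (fun a => ⟨{S | ∃ b, (a, b) ∈ S.1}, fun S =>
      let ⟨b, hb⟩ := S.2.2.exists_insert_left hs S.2.1 a
      ⟨⟨insert (a, b) S.1, S.2.1.insert _, hb⟩, ⟨b, mem_insert _ _⟩, subset_insert _ _⟩⟩)
    (fun b => ⟨{S | ∃ a, (a, b) ∈ S.1}, fun S =>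
      let ⟨a, ha⟩ := S.2.2.exists_insert_right hr S.2.1 b
      ⟨⟨insert (a, b) S.1, S.2.1.insert _, ha⟩, ⟨a, mem_insert _ _⟩, subset_insert _ _⟩⟩)
  -- Rasiowa–Sikorski: an increasing sequence of finite partial isomorphisms meeting every
  -- `cofinal i`, so that its union is defined everywhere on both sides.
  let seq := Order.sequenceOfCofinals (⟨∅, finite_empty, .empty⟩ : FinPartialIso) cofinal
  have hseq (i : α ⊕ β) : seq (Encodable.encode i + 1) ∈ cofinal i :=
    Order.sequenceOfCofinals.encode_mem _ _ i
  refine IsPartialIso.relIsoRel (S := ⋃ n, (seq n).1) (.iUnion (fun n => (seq n).2.2)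
    ((Subtype.mono_coe _).comp (Order.sequenceOfCofinals.monotone _ _)).directed_le)
    (fun a => ?_) (fun b => ?_)
  · obtain ⟨b, hb⟩ := hseq (.inl a)
    exact ⟨b, mem_iUnion_of_mem _ hb⟩
  · obtain ⟨a, ha⟩ := hseq (.inr b)
    exact ⟨a, mem_iUnion_of_mem _ ha⟩

end IsRandomPosetRel

theorem isCopy_of_relIsoRel {X : Type*} {r : X → X → Prop} {A : Set X}
    (h : RelIsoRel r fun a b : A => r a b) : IsCopy r A := by
  obtain ⟨e, he⟩ := h
  refine ⟨Subtype.val ∘ e, Subtype.val_injective.comp e.injective, ?_, he⟩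
  rw [range_comp, e.range_eq_univ, image_univ, Subtype.range_val]

theorem statement_9_general {D : Type*} [Countable D] (r : D → D → Prop)
    (hrp : IsRandomPosetRel r) (F : Set D) (hF : F.Finite) :
    IsCopy r (Set.univ \ F) := by
  have hcofinite : (Set.univ \ F)ᶜ.Finite := by rwa [← compl_eq_univ_sdiff, compl_compl]
  exact isCopy_of_relIsoRel (hrp.relIsoRel (hrp.restrict hcofinite))

theorem statement_9 {D : Type*} [Countable D] [Infinite D] (r : D → D → Prop)
    (hrp : IsRandomPosetRel r) (F : Set D) (hF : F.Finite) :
    IsCopy r (Set.univ \ F) :=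
  statement_9_general r hrp F hF
end

section
/- Let ⟨D,<⟩ be a countable random poset and let D = A ∪ B with A ∩ B = ∅. Then A contains a subset order-isomorphic to ⟨D,<⟩ (with the induced order) or B contains a subset order-isomorphic to ⟨D,<⟩. -/
open Set

/-!
If `A` fails the extension property inside `D`, some admissible triple `(L, G, U)` of points
of `A` has no realizer in `A`, so the set `W` of all its realizers lies in `B`. This `W` has the
extension property itself: for an admissible triple in `W`, adding `(L, G, U)` keeps it
admissible in `D`, and a realizer of the union is a realizer in `W`. Finally, any subset with
the extension property contains a copy of `D`, built by the forth half of a back-and-forth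
argument along an enumeration of `D`.
-/

section ExtensionProperty

open Function

variable {D : Type*} (r : D → D → Prop)

def realizers (L G U : Finset D) : Set D :=
  {p | (∀ l ∈ L, r l p) ∧ (∀ g ∈ G, r p g) ∧ ∀ u ∈ U, p ≠ u ∧ ¬ r p u ∧ ¬ r u p}

def IsAdmissible (L G U : Finset D) : Prop :=
  Disjoint L G ∧ Disjoint L U ∧ Disjoint G U ∧ (∀ l ∈ L, ∀ g ∈ G, r l g) ∧
    (∀ u ∈ U, ∀ l ∈ L, ¬ r u l) ∧ (∀ u ∈ U, ∀ g ∈ G, ¬ r g u)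

def HasExtensionPropertyOn (T : Set D) : Prop :=
  ∀ L G U : Finset D, ↑L ⊆ T → ↑G ⊆ T → ↑U ⊆ T → IsAdmissible r L G U →
    (realizers r L G U ∩ T).Nonempty

def IsPartialEmbedding (T : Set D) (s : Finset D) (φ : D → D) : Prop :=
  (∀ a ∈ s, φ a ∈ T) ∧ Set.InjOn φ s ∧ ∀ a ∈ s, ∀ b ∈ s, r a b ↔ r (φ a) (φ b)

variable {r} {T : Set D}

lemma IsRandomPosetRel.hasExtensionPropertyOn_univ (h : IsRandomPosetRel r) :
    HasExtensionPropertyOn r univ := by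
  rintro L G U - - - ⟨hLG, hLU, hGU, hLG', hUL, hGU'⟩
  obtain ⟨p, -, -, -, hp⟩ := h.2.2 L G U hLG hLU hGU hLG' hUL hGU'
  exact ⟨p, hp, trivial⟩

lemma HasExtensionPropertyOn.infinite (hT : HasExtensionPropertyOn r T) : T.Infinite := by
  intro hfin
  obtain ⟨p, ⟨-, -, hp⟩, hpT⟩ := hT ∅ ∅ hfin.toFinset (by simp) (by simp) (by simp)
    (by simp [IsAdmissible])
  exact (hp p (hfin.mem_toFinset.2 hpT)).1 rfl

lemma realizers_union [DecidableEq D] (L G U L' G' U' : Finset D) :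
    realizers r (L ∪ L') (G ∪ G') (U ∪ U') = realizers r L G U ∩ realizers r L' G' U' := by
  ext p
  simp only [realizers, Finset.mem_union, or_imp, forall_and, mem_ofPred_eq, mem_inter_iff]
  tauto

lemma IsPartialEmbedding.coe_image_subset [DecidableEq D] {s t : Finset D} {φ : D → D}
    (hφ : IsPartialEmbedding r T s φ) (ht : t ⊆ s) : ↑(t.image φ) ⊆ T := by
  intro y hy
  obtain ⟨a, ha, rfl⟩ := Finset.mem_image.1 hy
  exact hφ.1 a (ht ha)

variable [IsStrictOrder D r] {L G U L' G' U' : Finset D}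

lemma notMem_of_mem_realizers {p : D} (hp : p ∈ realizers r L G U) : p ∉ L ∧ p ∉ G ∧ p ∉ U :=
  ⟨fun h => irrefl_of r p (hp.1 p h), fun h => irrefl_of r p (hp.2.1 p h),
    fun h => (hp.2.2 p h).1 rfl⟩

lemma IsAdmissible.union [DecidableEq D] (h : IsAdmissible r L G U)
    (h' : IsAdmissible r L' G' U')
    (hL : ↑L ⊆ realizers r L' G' U') (hG : ↑G ⊆ realizers r L' G' U')
    (hU : ↑U ⊆ realizers r L' G' U') :
    IsAdmissible r (L ∪ L') (G ∪ G') (U ∪ U') := by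
  obtain ⟨hLG, hLU, hGU, hlg, hul, hgu⟩ := h
  obtain ⟨hLG', hLU', hGU', hlg', hul', hgu'⟩ := h'
  simp only [IsAdmissible, Finset.disjoint_union_left, Finset.disjoint_union_right,
    Finset.mem_union]
  refine ⟨⟨⟨hLG, ?_⟩, ?_, hLG'⟩, ⟨⟨hLU, ?_⟩, ?_, hLU'⟩, ⟨⟨hGU, ?_⟩, ?_, hGU'⟩, ?_, ?_, ?_⟩
  · exact Finset.disjoint_right.2 fun x hx => (notMem_of_mem_realizers (hG hx)).1
  · exact Finset.disjoint_left.2 fun x hx => (notMem_of_mem_realizers (hL hx)).2.1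
  · exact Finset.disjoint_right.2 fun x hx => (notMem_of_mem_realizers (hU hx)).1
  · exact Finset.disjoint_left.2 fun x hx => (notMem_of_mem_realizers (hL hx)).2.2
  · exact Finset.disjoint_right.2 fun x hx => (notMem_of_mem_realizers (hU hx)).2.1
  · exact Finset.disjoint_left.2 fun x hx => (notMem_of_mem_realizers (hG hx)).2.2
  · rintro l (hl | hl) g (hg | hg)
    exacts [hlg l hl g hg, (hL hl).2.1 g hg, (hG hg).1 l hl, hlg' l hl g hg]
  · rintro u (hu | hu) l (hl | hl)
    exacts [hul u hu l hl, asymm_of r ((hU hu).1 l hl), ((hL hl).2.2 u hu).2.2, hul' u hu l hl]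
  · rintro u (hu | hu) g (hg | hg)
    exacts [hgu u hu g hg, asymm_of r ((hU hu).2.1 g hg), ((hG hg).2.2 u hu).2.1, hgu' u hu g hg]

lemma HasExtensionPropertyOn.realizers_inter (hT : HasExtensionPropertyOn r T)
    (hL' : ↑L' ⊆ T) (hG' : ↑G' ⊆ T) (hU' : ↑U' ⊆ T) (h' : IsAdmissible r L' G' U') :
    HasExtensionPropertyOn r (realizers r L' G' U' ∩ T) := by
  classical
  intro L G U hL hG hU h
  obtain ⟨p, hp, hpT⟩ := hT (L ∪ L') (G ∪ G') (U ∪ U')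
    (by push_cast; exact union_subset (hL.trans inter_subset_right) hL')
    (by push_cast; exact union_subset (hG.trans inter_subset_right) hG')
    (by push_cast; exact union_subset (hU.trans inter_subset_right) hU')
    (h.union h' (hL.trans inter_subset_left) (hG.trans inter_subset_left)
      (hU.trans inter_subset_left))
  rw [realizers_union] at hp
  exact ⟨p, hp.1, hp.2, hpT⟩

lemma HasExtensionPropertyOn.inter_or_exists_subset_diff (hT : HasExtensionPropertyOn r T)
    (A : Set D) :
    HasExtensionPropertyOn r (T ∩ A) ∨ ∃ W ⊆ T \ A, HasExtensionPropertyOn r W := by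
  refine or_iff_not_imp_left.2 fun hA => ?_
  simp only [HasExtensionPropertyOn, not_forall, not_nonempty_iff_eq_empty] at hA
  obtain ⟨L, G, U, hL, hG, hU, h, hempty⟩ := hA
  refine ⟨realizers r L G U ∩ T, fun p ⟨hp, hpT⟩ => ⟨hpT, fun hpA => ?_⟩,
    hT.realizers_inter (hL.trans inter_subset_left) (hG.trans inter_subset_left)
      (hU.trans inter_subset_left) h⟩
  exact (eq_empty_iff_forall_notMem.1 hempty) p ⟨hp, hpT, hpA⟩

section Forth

variable [DecidableEq D] [DecidableRel r] {s : Finset D} {φ : D → D} {x : D}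

lemma IsPartialEmbedding.isAdmissible_image_cut (hφ : IsPartialEmbedding r T s φ) (x : D) :
    IsAdmissible r ((s.filter (r · x)).image φ) ((s.filter (r x ·)).image φ)
      ((s.filter fun a => ¬ r a x ∧ ¬ r x a).image φ) := by
  obtain ⟨-, hinj, hrel⟩ := hφ
  simp only [IsAdmissible, Finset.disjoint_left, Finset.forall_mem_image, Finset.mem_filter]
  simp only [Finset.mem_image, Finset.mem_filter, not_exists, not_and, and_imp]
  refine ⟨?_, ?_, ?_, ?_, ?_, ?_⟩
  · intro a ha hax b hb hxb hba
    rw [hinj hb ha hba] at hxb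
    exact asymm_of r hax hxb
  · intro a ha hax b hb hbx _ hba
    exact hbx (hinj hb ha hba ▸ hax)
  · intro a ha hxa b hb _ hxb hba
    exact hxb (hinj hb ha hba ▸ hxa)
  · intro a ha hax b hb hxb
    exact (hrel a ha b hb).1 (trans_of r hax hxb)
  · intro a ha hax _ b hb hbx hab
    exact hax (trans_of r ((hrel a ha b hb).2 hab) hbx)
  · intro a ha _ hxa b hb hxb hba
    exact hxa (trans_of r hxb ((hrel b hb a ha).2 hba))

lemma IsPartialEmbedding.update_of_mem_realizers (hφ : IsPartialEmbedding r T s φ) (hx : x ∉ s)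
    {p : D} (hpT : p ∈ T) (hp : p ∈ realizers r ((s.filter (r · x)).image φ)
      ((s.filter (r x ·)).image φ) ((s.filter fun a => ¬ r a x ∧ ¬ r x a).image φ)) :
    IsPartialEmbedding r T (insert x s) (update φ x p) := by
  obtain ⟨hT, hinj, hrel⟩ := hφ
  obtain ⟨hL, hG, hU⟩ := hp
  simp only [Finset.forall_mem_image, Finset.mem_filter, and_imp] at hL hG hU
  have hcut : ∀ a ∈ s, (r a x ↔ r (φ a) p) ∧ (r x a ↔ r p (φ a)) ∧ φ a ≠ p := by
    intro a ha
    by_cases hax : r a x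
    · have hap := hL ha hax
      exact ⟨iff_of_true hax hap, iff_of_false (asymm_of r hax) (asymm_of r hap),
        fun h => irrefl_of r p (h ▸ hap)⟩
    by_cases hxa : r x a
    · have hpa := hG ha hxa
      exact ⟨iff_of_false hax (asymm_of r hpa), iff_of_true hxa hpa,
        fun h => irrefl_of r p (h ▸ hpa)⟩
    obtain ⟨hne, hpa, hap⟩ := hU ha hax hxa
    exact ⟨iff_of_false hax hap, iff_of_false hxa hpa, Ne.symm hne⟩
  have hφa : ∀ a ∈ s, update φ x p a = φ a := fun a ha =>
    update_of_ne (ne_of_mem_of_not_mem ha hx) _ _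
  refine ⟨?_, ?_, ?_⟩
  · simp only [Finset.forall_mem_insert, update_self]
    exact ⟨hpT, fun a ha => hφa a ha ▸ hT a ha⟩
  · rw [Finset.coe_insert, injOn_insert (by exact_mod_cast hx), update_self]
    refine ⟨fun a ha b hb h => hinj ha hb (by rwa [hφa a ha, hφa b hb] at h), ?_⟩
    rintro ⟨a, ha, h⟩
    exact (hcut a ha).2.2 (by rwa [hφa a ha] at h)
  · simp only [Finset.forall_mem_insert, update_self]
    refine ⟨⟨iff_of_false (irrefl_of r x) (irrefl_of r p), fun b hb => ?_⟩,
      fun a ha => ⟨?_, fun b hb => ?_⟩⟩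
    · rw [hφa b hb]; exact (hcut b hb).2.1
    · rw [hφa a ha]; exact (hcut a ha).1
    · rw [hφa a ha, hφa b hb]; exact hrel a ha b hb

lemma HasExtensionPropertyOn.exists_update (hT : HasExtensionPropertyOn r T)
    (hφ : IsPartialEmbedding r T s φ) (hx : x ∉ s) :
    ∃ p, IsPartialEmbedding r T (insert x s) (update φ x p) := by
  obtain ⟨p, hp, hpT⟩ := hT _ _ _ (hφ.coe_image_subset (Finset.filter_subset _ _))
    (hφ.coe_image_subset (Finset.filter_subset _ _))
    (hφ.coe_image_subset (Finset.filter_subset _ _)) (hφ.isAdmissible_image_cut x)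
  exact ⟨p, hφ.update_of_mem_realizers hx hpT hp⟩

end Forth

lemma HasExtensionPropertyOn.exists_copy_subset [Countable D]
    (hT : HasExtensionPropertyOn r T) : ∃ S ⊆ T, IsCopy r S := by
  classical
  have : Infinite D := infinite_univ_iff.1 (hT.infinite.mono (subset_univ T))
  obtain ⟨e⟩ : Nonempty (ℕ ≃ D) := nonempty_equiv_of_countable
  set s : ℕ → Finset D := fun n => (Finset.range n).map e.toEmbedding with hs
  have mem_s {n a} : a ∈ s n ↔ e.symm a < n := by simp [hs, Finset.mem_map_equiv]
  have s_succ (n) : s (n + 1) = insert (e n) (s n) := by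
    simp [hs, Finset.range_add_one, Finset.map_insert]
  have step (n) (φ : D → D) (hφ : IsPartialEmbedding r T (s n) φ) :
      ∃ p, IsPartialEmbedding r T (s (n + 1)) (update φ (e n) p) := by
    rw [s_succ]; exact hT.exists_update hφ (by simp [mem_s])
  choose! next hnext using step
  let F : ℕ → D → D := fun n => Nat.rec id (fun n φ => update φ (e n) (next n φ)) n
  have hF (n) : IsPartialEmbedding r T (s n) (F n) := by
    induction n with
    | zero => simp [IsPartialEmbedding, hs]
    | succ n ih => exact hnext n (F n) ih
  have F_stable {m n} (hmn : m ≤ n) {a} (ha : a ∈ s m) : F n a = F m a := by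
    induction n, hmn using Nat.le_induction with
    | base => rfl
    | succ n hmn ih =>
      rw [← ih]
      refine update_of_ne ?_ _ _
      rintro rfl
      exact (mem_s.1 ha).not_ge (by simpa using hmn)
  set f : D → D := fun a => F (e.symm a + 1) a
  have hf {n a} (ha : a ∈ s n) : f a = F n a :=
    (F_stable (mem_s.1 ha) (mem_s.2 (lt_add_one _))).symm
  have mem_s_max (a b : D) :
      a ∈ s (e.symm a + e.symm b + 1) ∧ b ∈ s (e.symm a + e.symm b + 1) :=
    ⟨mem_s.2 (by omega), mem_s.2 (by omega)⟩
  refine ⟨range f, ?_, f, fun a b hab => ?_, rfl, fun a b => ?_⟩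
  · rintro _ ⟨a, rfl⟩
    exact (hF _).1 a (mem_s.2 (lt_add_one _))
  · obtain ⟨ha, hb⟩ := mem_s_max a b
    rw [hf ha, hf hb] at hab
    exact (hF _).2.1 ha hb hab
  · obtain ⟨ha, hb⟩ := mem_s_max a b
    rw [hf ha, hf hb]
    exact (hF _).2.2 a ha b hb

end ExtensionProperty

theorem statement_10_general {D : Type*} [Countable D] (r : D → D → Prop)
    (hrp : IsRandomPosetRel r) (A B : Set D) (hcov : A ∪ B = Set.univ) :
    (∃ S ⊆ A, IsCopy r S) ∨ (∃ S ⊆ B, IsCopy r S) := by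
  have : IsStrictOrder D r := { irrefl := hrp.1, trans := hrp.2.1 }
  rcases hrp.hasExtensionPropertyOn_univ.inter_or_exists_subset_diff A with hA | ⟨W, hWA, hW⟩
  · rw [univ_inter] at hA
    exact .inl hA.exists_copy_subset
  · obtain ⟨S, hSW, hS⟩ := hW.exists_copy_subset
    exact .inr ⟨S, hSW.trans (hWA.trans (sdiff_subset_iff.2 hcov.ge)), hS⟩

theorem statement_10 {D : Type*} [Countable D] [Infinite D] (r : D → D → Prop)
    (hrp : IsRandomPosetRel r) (A B : Set D) (hcov : A ∪ B = Set.univ)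
    (hdisj : A ∩ B = ∅) :
    (∃ S ⊆ A, IsCopy r S) ∨ (∃ S ⊆ B, IsCopy r S) :=
  statement_10_general r hrp A B hcov
end

section
/- Let ⟨D,<⟩ be a countable random poset and let C ⊆ D be an infinite set such that no subset of C (with the induced order) is order-isomorphic to ⟨D,<⟩ (for example, C can be an infinite antichain in D). Then the family 𝒫 = {B ⊆ D : D \ C ⊆* B} satisfies: (a) every B ∈ 𝒫, with the induced order, is order-isomorphic to ⟨D,<⟩; and (b) 𝒫 is a positive family on D. -/
open Set

section Aux

variable {D : Type*} (r : D → D → Prop)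

/-- Internal extension property of a set `S`. -/
def ExtIn (S : Set D) : Prop :=
  ∀ L G U : Finset D, ↑L ⊆ S → ↑G ⊆ S → ↑U ⊆ S →
    Disjoint L G → Disjoint L U → Disjoint G U →
    (∀ l ∈ L, ∀ g ∈ G, r l g) →
    (∀ u ∈ U, ∀ l ∈ L, ¬ r u l) →
    (∀ u ∈ U, ∀ g ∈ G, ¬ r g u) →
    ∃ p ∈ S, p ∉ L ∧ p ∉ G ∧ p ∉ U ∧ (∀ l ∈ L, r l p) ∧ (∀ g ∈ G, r p g) ∧
      ∀ u ∈ U, ¬ r p u ∧ ¬ r u p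

variable {r}

lemma extIn_univ (hrp : IsRandomPosetRel r) : ExtIn r (univ : Set D) := by
  intro L G U _ _ _ h1 h2 h3 h4 h5 h6
  obtain ⟨p, hp⟩ := hrp.2.2 L G U h1 h2 h3 h4 h5 h6
  exact ⟨p, trivial, hp.1, hp.2.1, hp.2.2.1, hp.2.2.2.1, hp.2.2.2.2.1,
    fun u hu => ⟨(hp.2.2.2.2.2 u hu).2.1, (hp.2.2.2.2.2 u hu).2.2⟩⟩

/-- Witnesses avoiding any fixed finite set exist. -/
lemma extIn_avoid (hirr : ∀ x, ¬ r x x) (htr : ∀ x y z, r x y → r y z → r x z)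
    {S : Set D} (hS : ExtIn r S) (L G U : Finset D)
    (hLS : ↑L ⊆ S) (hGS : ↑G ⊆ S) (hUS : ↑U ⊆ S)
    (dLG : Disjoint L G) (dLU : Disjoint L U) (dGU : Disjoint G U)
    (h4 : ∀ l ∈ L, ∀ g ∈ G, r l g)
    (h5 : ∀ u ∈ U, ∀ l ∈ L, ¬ r u l)
    (h6 : ∀ u ∈ U, ∀ g ∈ G, ¬ r g u) (V : Finset D) :
    ∃ p ∈ S, p ∉ V ∧ p ∉ L ∧ p ∉ G ∧ p ∉ U ∧ (∀ l ∈ L, r l p) ∧ (∀ g ∈ G, r p g) ∧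
      ∀ u ∈ U, ¬ r p u ∧ ¬ r u p := by
  classical
  -- filter out of V the "pseudo-witnesses"
  set W : Finset D := V.filter (fun v => v ∈ S ∧ v ∉ L ∧ v ∉ G ∧ v ∉ U ∧
    (∀ l ∈ L, r l v) ∧ (∀ g ∈ G, r v g) ∧ ∀ u ∈ U, ¬ r v u ∧ ¬ r u v) with hW
  have hWmem : ∀ v ∈ W, v ∈ S ∧ v ∉ L ∧ v ∉ G ∧ v ∉ U ∧
      (∀ l ∈ L, r l v) ∧ (∀ g ∈ G, r v g) ∧ ∀ u ∈ U, ¬ r v u ∧ ¬ r u v := by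
    intro v hv; exact (Finset.mem_filter.1 hv).2
  have hUW : ↑(U ∪ W) ⊆ S := by
    intro x hx
    rcases Finset.mem_union.1 hx with h | h
    · exact hUS h
    · exact (hWmem x h).1
  have dLUW : Disjoint L (U ∪ W) := by
    rw [Finset.disjoint_union_right]
    refine ⟨dLU, Finset.disjoint_left.2 fun a ha hb => (hWmem a hb).2.1 ha⟩
  have dGUW : Disjoint G (U ∪ W) := by
    rw [Finset.disjoint_union_right]
    refine ⟨dGU, Finset.disjoint_left.2 fun a ha hb => (hWmem a hb).2.2.1 ha⟩
  obtain ⟨p, hpS, hpL, hpG, hpU, hrel⟩ :=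
    hS L G (U ∪ W) hLS hGS hUW dLG dLUW dGUW h4
      (by
        intro u hu l hl
        rcases Finset.mem_union.1 hu with h | h
        · exact h5 u h l hl
        · intro hrul
          exact hirr l (htr l u l ((hWmem u h).2.2.2.2.1 l hl) hrul))
      (by
        intro u hu g hg
        rcases Finset.mem_union.1 hu with h | h
        · exact h6 u h g hg
        · intro hrgu
          exact hirr g (htr g u g hrgu ((hWmem u h).2.2.2.2.2.1 g hg)))
  refine ⟨p, hpS, ?_, hpL, hpG, fun h => hpU (Finset.mem_union_left _ h),
    hrel.1, hrel.2.1, fun u hu => hrel.2.2 u (Finset.mem_union_left _ hu)⟩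
  intro hpV
  apply hpU
  apply Finset.mem_union_right
  rw [hW, Finset.mem_filter]
  exact ⟨hpV, hpS, hpL, hpG, fun h => hpU (Finset.mem_union_left _ h), hrel.1, hrel.2.1,
    fun u hu => hrel.2.2 u (Finset.mem_union_left _ hu)⟩

lemma extIn_diff_finite (hirr : ∀ x, ¬ r x x) (htr : ∀ x y z, r x y → r y z → r x z)
    {S : Set D} (hS : ExtIn r S) {F : Set D} (hF : F.Finite) : ExtIn r (S \ F) := by
  classical
  intro L G U hLS hGS hUS dLG dLU dGU h4 h5 h6
  obtain ⟨p, hpS, hpV, h⟩ := extIn_avoid hirr htr hS L G U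
    (hLS.trans (diff_subset)) (hGS.trans (diff_subset)) (hUS.trans (diff_subset))
    dLG dLU dGU h4 h5 h6 hF.toFinset
  refine ⟨p, ⟨hpS, fun hpF => hpV (hF.mem_toFinset.2 hpF)⟩, h⟩

lemma extIn_infinite (hirr : ∀ x, ¬ r x x) (htr : ∀ x y z, r x y → r y z → r x z)
    {S : Set D} (hS : ExtIn r S) : S.Infinite := by
  classical
  rw [Set.infinite_coe_iff.symm]
  rw [Set.infinite_coe_iff]
  intro hfin
  obtain ⟨p, hpS, hpV, _⟩ := extIn_avoid hirr htr hS ∅ ∅ ∅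
    (by simp) (by simp) (by simp) (by simp) (by simp) (by simp)
    (by simp) (by simp) (by simp) hfin.toFinset
  exact hpV (hfin.mem_toFinset.2 hpS)

/-- The set of witnesses of a fixed configuration itself has the extension property. -/

lemma extIn_witness (hirr : ∀ x, ¬ r x x) (htr : ∀ x y z, r x y → r y z → r x z)
    {S : Set D} (hS : ExtIn r S) (L G U : Finset D)
    (hLS : ↑L ⊆ S) (hGS : ↑G ⊆ S) (hUS : ↑U ⊆ S)
    (dLG : Disjoint L G) (dLU : Disjoint L U) (dGU : Disjoint G U)
    (h4 : ∀ l ∈ L, ∀ g ∈ G, r l g)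
    (h5 : ∀ u ∈ U, ∀ l ∈ L, ¬ r u l)
    (h6 : ∀ u ∈ U, ∀ g ∈ G, ¬ r g u) :
    ExtIn r {p | p ∈ S ∧ p ∉ L ∧ p ∉ G ∧ p ∉ U ∧ (∀ l ∈ L, r l p) ∧ (∀ g ∈ G, r p g) ∧
      ∀ u ∈ U, ¬ r p u ∧ ¬ r u p} := by
  classical
  set W : Set D := {p | p ∈ S ∧ p ∉ L ∧ p ∉ G ∧ p ∉ U ∧ (∀ l ∈ L, r l p) ∧
    (∀ g ∈ G, r p g) ∧ ∀ u ∈ U, ¬ r p u ∧ ¬ r u p} with hWdef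
  intro L' G' U' hL' hG' hU' dLG' dLU' dGU' h4' h5' h6'
  have hWm : ∀ x ∈ W, x ∈ S ∧ x ∉ L ∧ x ∉ G ∧ x ∉ U ∧ (∀ l ∈ L, r l x) ∧
      (∀ g ∈ G, r x g) ∧ ∀ u ∈ U, ¬ r x u ∧ ¬ r u x := fun x hx => hx
  have hL'W : ∀ x ∈ L', x ∈ W := fun x hx => hL' hx
  have hG'W : ∀ x ∈ G', x ∈ W := fun x hx => hG' hx
  have hU'W : ∀ x ∈ U', x ∈ W := fun x hx => hU' hx
  have dW : ∀ (A B : Finset D), (∀ x ∈ B, x ∈ W) → (A = L ∨ A = G ∨ A = U) → Disjoint A B := by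
    intro A B hB hA
    refine Finset.disjoint_left.2 fun a ha hb => ?_
    obtain ⟨_, nl, ng, nu, _⟩ := hB a hb
    rcases hA with rfl | rfl | rfl
    · exact nl ha
    · exact ng ha
    · exact nu ha
  obtain ⟨p, hpS, hpL, hpG, hpU, hrL, hrG, hrU⟩ :=
    hS (L ∪ L') (G ∪ G') (U ∪ U')
      (by push_cast; exact union_subset hLS (fun x hx => (hL' hx).1))
      (by push_cast; exact union_subset hGS (fun x hx => (hG' hx).1))
      (by push_cast; exact union_subset hUS (fun x hx => (hU' hx).1))
      (by
        rw [Finset.disjoint_union_left, Finset.disjoint_union_right,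
          Finset.disjoint_union_right]
        exact ⟨⟨dLG, dW L G' hG'W (Or.inl rfl)⟩,
          ⟨(dW G L' hL'W (Or.inr (Or.inl rfl))).symm, dLG'⟩⟩)
      (by
        rw [Finset.disjoint_union_left, Finset.disjoint_union_right,
          Finset.disjoint_union_right]
        exact ⟨⟨dLU, dW L U' hU'W (Or.inl rfl)⟩,
          ⟨(dW U L' hL'W (Or.inr (Or.inr rfl))).symm, dLU'⟩⟩)
      (by
        rw [Finset.disjoint_union_left, Finset.disjoint_union_right,
          Finset.disjoint_union_right]
        exact ⟨⟨dGU, dW G U' hU'W (Or.inr (Or.inl rfl))⟩,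
          ⟨(dW U G' hG'W (Or.inr (Or.inr rfl))).symm, dGU'⟩⟩)
      (by
        intro l hl g hg
        rcases Finset.mem_union.1 hl with hl | hl <;> rcases Finset.mem_union.1 hg with hg | hg
        · exact h4 l hl g hg
        · exact (hWm g (hG' hg)).2.2.2.2.1 l hl
        · exact (hWm l (hL' hl)).2.2.2.2.2.1 g hg
        · exact h4' l hl g hg)
      (by
        intro u hu l hl
        rcases Finset.mem_union.1 hu with hu | hu <;> rcases Finset.mem_union.1 hl with hl | hl
        · exact h5 u hu l hl
        · exact ((hWm l (hL' hl)).2.2.2.2.2.2 u hu).2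
        · intro hrul
          exact hirr l (htr l u l ((hWm u (hU' hu)).2.2.2.2.1 l hl) hrul)
        · exact h5' u hu l hl)
      (by
        intro u hu g hg
        rcases Finset.mem_union.1 hu with hu | hu <;> rcases Finset.mem_union.1 hg with hg | hg
        · exact h6 u hu g hg
        · exact ((hWm g (hG' hg)).2.2.2.2.2.2 u hu).1
        · intro hrgu
          exact hirr g (htr g u g hrgu ((hWm u (hU' hu)).2.2.2.2.2.1 g hg))
        · exact h6' u hu g hg)
  refine ⟨p, ⟨hpS, fun h => hpL (Finset.mem_union_left _ h),
      fun h => hpG (Finset.mem_union_left _ h), fun h => hpU (Finset.mem_union_left _ h),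
      fun l hl => hrL l (Finset.mem_union_left _ hl),
      fun g hg => hrG g (Finset.mem_union_left _ hg),
      fun u hu => hrU u (Finset.mem_union_left _ hu)⟩,
    fun h => hpL (Finset.mem_union_right _ h),
    fun h => hpG (Finset.mem_union_right _ h),
    fun h => hpU (Finset.mem_union_right _ h),
    fun l hl => hrL l (Finset.mem_union_right _ hl),
    fun g hg => hrG g (Finset.mem_union_right _ hg),
    fun u hu => hrU u (Finset.mem_union_right _ hu)⟩

/-- `p` is a finite partial isomorphism whose range lies in `S`. -/
def Good (r : D → D → Prop) (S : Set D) (p : Finset (D × D)) : Prop :=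
  (∀ z ∈ p, z.2 ∈ S) ∧
    ∀ z ∈ p, ∀ w ∈ p, (z.1 = w.1 ↔ z.2 = w.2) ∧ (r z.1 w.1 ↔ r z.2 w.2)

lemma good_empty (S : Set D) : Good r S ∅ := by
  constructor <;> intro z hz <;> simp at hz

set_option maxHeartbeats 1000000 in
lemma step_forth [DecidableEq D] (hirr : ∀ x, ¬ r x x) (htr : ∀ x y z, r x y → r y z → r x z)
    {T : Set D} (hT : ExtIn r T) {p : Finset (D × D)} (hp : Good r T p) (a : D) :
    ∃ b ∈ T, Good r T (insert (a, b) p) := by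
  classical
  by_cases ha : ∃ z ∈ p, z.1 = a
  · obtain ⟨z, hz, hza⟩ := ha
    refine ⟨z.2, hp.1 z hz, ?_⟩
    have : insert (a, z.2) p = p := Finset.insert_eq_self.2 (by rwa [← hza, Prod.mk.eta])
    rwa [this]
  push_neg at ha
  -- images
  set L : Finset D := (p.filter (fun z => r z.1 a)).image Prod.snd with hLdef
  set G : Finset D := (p.filter (fun z => r a z.1)).image Prod.snd with hGdef
  set U : Finset D := (p.filter (fun z => ¬ r z.1 a ∧ ¬ r a z.1)).image Prod.snd with hUdef
  have memL : ∀ d, d ∈ L ↔ ∃ z ∈ p, r z.1 a ∧ z.2 = d := by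
    intro d; simp [hLdef, Finset.mem_image, Finset.mem_filter, and_assoc]
  have memG : ∀ d, d ∈ G ↔ ∃ z ∈ p, r a z.1 ∧ z.2 = d := by
    intro d; simp [hGdef, Finset.mem_image, Finset.mem_filter, and_assoc]
  have memU : ∀ d, d ∈ U ↔ ∃ z ∈ p, (¬ r z.1 a ∧ ¬ r a z.1) ∧ z.2 = d := by
    intro d; simp [hUdef, Finset.mem_image, Finset.mem_filter, and_assoc]
  -- key: for pairs in p, snd determines fst
  have snd_inj : ∀ z ∈ p, ∀ w ∈ p, z.2 = w.2 → z.1 = w.1 := by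
    intro z hz w hw h; exact ((hp.2 z hz w hw).1).2 h
  have hsub : ∀ (P : D × D → Prop) (inst : DecidablePred P),
      ↑((p.filter P).image Prod.snd) ⊆ T := by
    intro P _ d hd
    simp only [Finset.coe_image, Set.mem_image, Finset.mem_coe] at hd
    obtain ⟨z, hz, rfl⟩ := hd
    exact hp.1 z (Finset.mem_of_mem_filter z hz)
  have dLG : Disjoint L G := Finset.disjoint_left.2 (by
    intro d hd hd'
    obtain ⟨z, hz, h1, rfl⟩ := (memL d).1 hd
    obtain ⟨w, hw, h2, hwz⟩ := (memG z.2).1 hd'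
    have he := snd_inj w hw z hz hwz
    exact hirr z.1 (htr _ _ _ h1 (he ▸ h2)))
  have dLU : Disjoint L U := Finset.disjoint_left.2 (by
    intro d hd hd'
    obtain ⟨z, hz, h1, rfl⟩ := (memL d).1 hd
    obtain ⟨w, hw, h2, hwz⟩ := (memU z.2).1 hd'
    have he := snd_inj w hw z hz hwz
    exact (he ▸ h2.1) h1)
  have dGU : Disjoint G U := Finset.disjoint_left.2 (by
    intro d hd hd'
    obtain ⟨z, hz, h1, rfl⟩ := (memG d).1 hd
    obtain ⟨w, hw, h2, hwz⟩ := (memU z.2).1 hd'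
    have he := snd_inj w hw z hz hwz
    exact (he ▸ h2.2) h1)
  obtain ⟨b, hbT, hbL, hbG, hbU, hrL, hrG, hrU⟩ :=
    hT L G U (hLdef ▸ hsub _ _) (hGdef ▸ hsub _ _) (hUdef ▸ hsub _ _)
      dLG dLU dGU
      (by
        intro l hl g hg
        obtain ⟨z, hz, hza, rfl⟩ := (memL l).1 hl
        obtain ⟨w, hw, haw, rfl⟩ := (memG g).1 hg
        exact ((hp.2 z hz w hw).2).1 (htr _ _ _ hza haw))
      (by
        intro u hu l hl
        obtain ⟨z, hz, hzu, rfl⟩ := (memU u).1 hu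
        obtain ⟨w, hw, hwa, rfl⟩ := (memL l).1 hl
        intro hr
        exact hzu.1 (htr _ _ _ (((hp.2 z hz w hw).2).2 hr) hwa))
      (by
        intro u hu g hg
        obtain ⟨z, hz, hzu, rfl⟩ := (memU u).1 hu
        obtain ⟨w, hw, haw, rfl⟩ := (memG g).1 hg
        intro hr
        exact hzu.2 (htr _ _ _ haw (((hp.2 w hw z hz).2).2 hr)))
  -- every snd of p is in L ∪ G ∪ U
  have hcover : ∀ z ∈ p, z.2 ∈ L ∨ z.2 ∈ G ∨ z.2 ∈ U := by
    intro z hz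
    by_cases h1 : r z.1 a
    · exact Or.inl ((memL z.2).2 ⟨z, hz, h1, rfl⟩)
    by_cases h2 : r a z.1
    · exact Or.inr (Or.inl ((memG z.2).2 ⟨z, hz, h2, rfl⟩))
    · exact Or.inr (Or.inr ((memU z.2).2 ⟨z, hz, ⟨h1, h2⟩, rfl⟩))
  have hbne : ∀ z ∈ p, z.2 ≠ b := by
    intro z hz h
    rcases hcover z hz with hm | hm | hm
    · exact hbL (h ▸ hm)
    · exact hbG (h ▸ hm)
    · exact hbU (h ▸ hm)
  -- relations between b and old elements
  have key : ∀ z ∈ p, (r z.1 a ↔ r z.2 b) ∧ (r a z.1 ↔ r b z.2) := by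
    intro z hz
    constructor
    · constructor
      · intro h; exact hrL z.2 ((memL z.2).2 ⟨z, hz, h, rfl⟩)
      · intro h
        by_contra hza
        by_cases h2 : r a z.1
        · have : r b z.2 := hrG z.2 ((memG z.2).2 ⟨z, hz, h2, rfl⟩)
          exact hirr b (htr _ _ _ this h)
        · exact (hrU z.2 ((memU z.2).2 ⟨z, hz, ⟨hza, h2⟩, rfl⟩)).2 h
    · constructor
      · intro h; exact hrG z.2 ((memG z.2).2 ⟨z, hz, h, rfl⟩)
      · intro h
        by_contra haz
        by_cases h1 : r z.1 a
        · have : r z.2 b := hrL z.2 ((memL z.2).2 ⟨z, hz, h1, rfl⟩)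
          exact hirr b (htr _ _ _ h this)
        · exact (hrU z.2 ((memU z.2).2 ⟨z, hz, ⟨h1, haz⟩, rfl⟩)).1 h
  refine ⟨b, hbT, ?_, ?_⟩
  · intro z hz
    rcases Finset.mem_insert.1 hz with rfl | hz
    · exact hbT
    · exact hp.1 z hz
  · intro z hz w hw
    rcases Finset.mem_insert.1 hz with rfl | hz <;> rcases Finset.mem_insert.1 hw with rfl | hw
    · simp [hirr a, hirr b]
    · exact ⟨⟨fun h => absurd h.symm (ha w hw), fun h => absurd h.symm (hbne w hw)⟩,
        ⟨fun h => ((key w hw).2).1 h, fun h => ((key w hw).2).2 h⟩⟩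
    · constructor
      · constructor
        · intro h; exact absurd h (ha z hz)
        · intro h; exact absurd h (hbne z hz)
      · exact (key z hz).1
    · exact hp.2 z hz w hw

lemma step_back [DecidableEq D] (hirr : ∀ x, ¬ r x x) (htr : ∀ x y z, r x y → r y z → r x z)
    (hU : ExtIn r (univ : Set D)) {S : Set D} {p : Finset (D × D)} (hp : Good r S p)
    {b : D} (hb : b ∈ S) : ∃ a, Good r S (insert (a, b) p) := by
  classical
  have hp' : Good r (univ : Set D) (p.image Prod.swap) := by
    refine ⟨fun z hz => trivial, ?_⟩
    intro z hz w hw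
    simp only [Finset.mem_image] at hz hw
    obtain ⟨z0, hz0, rfl⟩ := hz
    obtain ⟨w0, hw0, rfl⟩ := hw
    exact ⟨((hp.2 z0 hz0 w0 hw0).1).symm, ((hp.2 z0 hz0 w0 hw0).2).symm⟩
  obtain ⟨a, -, hq⟩ := step_forth hirr htr hU hp' b
  refine ⟨a, ?_, ?_⟩
  · intro z hz
    rcases Finset.mem_insert.1 hz with rfl | hz
    · exact hb
    · exact hp.1 z hz
  · have himg : ∀ z ∈ insert (a, b) p, z.swap ∈ insert (b, a) (p.image Prod.swap) := by
      intro z hz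
      rcases Finset.mem_insert.1 hz with rfl | hz
      · exact Finset.mem_insert_self _ _
      · exact Finset.mem_insert_of_mem (Finset.mem_image_of_mem _ hz)
    intro z hz w hw
    have h := hq.2 z.swap (himg z hz) w.swap (himg w hw)
    exact ⟨h.1.symm, h.2.symm⟩

lemma step2 [DecidableEq D] (hirr : ∀ x, ¬ r x x) (htr : ∀ x y z, r x y → r y z → r x z)
    (hU : ExtIn r (univ : Set D)) {S : Set D} (hS : ExtIn r S) {p : Finset (D × D)}
    (hp : Good r S p) (a b : D) (hb : b ∈ S) :
    ∃ q : Finset (D × D), p ⊆ q ∧ Good r S q ∧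
      a ∈ q.image Prod.fst ∧ b ∈ q.image Prod.snd := by
  obtain ⟨b1, -, hq1⟩ := step_forth hirr htr hS hp a
  obtain ⟨a2, hq2⟩ := step_back hirr htr hU hq1 hb
  refine ⟨insert (a2, b) (insert (a, b1) p),
    fun z hz => Finset.mem_insert_of_mem (Finset.mem_insert_of_mem hz), hq2, ?_, ?_⟩
  · exact Finset.mem_image.2 ⟨(a, b1),
      Finset.mem_insert_of_mem (Finset.mem_insert_self _ _), rfl⟩
  · exact Finset.mem_image.2 ⟨(a2, b), Finset.mem_insert_self _ _, rfl⟩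

noncomputable def chain [DecidableEq D] (hirr : ∀ x, ¬ r x x)
    (htr : ∀ x y z, r x y → r y z → r x z) (hU : ExtIn r (univ : Set D))
    {S : Set D} (hS : ExtIn r S) (ea : ℕ → D) (eb : ℕ → D) (heb : ∀ n, eb n ∈ S) :
    ℕ → {p : Finset (D × D) // Good r S p}
  | 0 => ⟨∅, good_empty S⟩
  | n + 1 =>
    ⟨(step2 hirr htr hU hS (chain hirr htr hU hS ea eb heb n).2 (ea n) (eb n)
        (heb n)).choose,
      (step2 hirr htr hU hS (chain hirr htr hU hS ea eb heb n).2 (ea n) (eb n)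
        (heb n)).choose_spec.2.1⟩

lemma chain_spec [DecidableEq D] (hirr : ∀ x, ¬ r x x)
    (htr : ∀ x y z, r x y → r y z → r x z) (hU : ExtIn r (univ : Set D))
    {S : Set D} (hS : ExtIn r S) (ea : ℕ → D) (eb : ℕ → D) (heb : ∀ n, eb n ∈ S) (n : ℕ) :
    (chain hirr htr hU hS ea eb heb n).1 ⊆ (chain hirr htr hU hS ea eb heb (n+1)).1 ∧
      ea n ∈ (chain hirr htr hU hS ea eb heb (n+1)).1.image Prod.fst ∧
      eb n ∈ (chain hirr htr hU hS ea eb heb (n+1)).1.image Prod.snd := by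
  have h := (step2 hirr htr hU hS (chain hirr htr hU hS ea eb heb n).2 (ea n) (eb n)
    (heb n)).choose_spec
  have he : (chain hirr htr hU hS ea eb heb (n+1)).1 =
      (step2 hirr htr hU hS (chain hirr htr hU hS ea eb heb n).2 (ea n) (eb n)
        (heb n)).choose := by rw [chain]
  rw [he]
  exact ⟨h.1, h.2.2.1, h.2.2.2⟩

lemma chain_mono [DecidableEq D] (hirr : ∀ x, ¬ r x x)
    (htr : ∀ x y z, r x y → r y z → r x z) (hU : ExtIn r (univ : Set D))
    {S : Set D} (hS : ExtIn r S) (ea : ℕ → D) (eb : ℕ → D) (heb : ∀ n, eb n ∈ S)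
    {m n : ℕ} (h : m ≤ n) :
    (chain hirr htr hU hS ea eb heb m).1 ⊆ (chain hirr htr hU hS ea eb heb n).1 := by
  induction n with
  | zero => simp_all
  | succ k ih =>
    rcases Nat.le_succ_iff.1 h with h' | rfl
    · exact (ih h').trans (chain_spec hirr htr hU hS ea eb heb k).1
    · rfl


lemma extIn_infinite' (hirr : ∀ x, ¬ r x x) {S : Set D} (hS : ExtIn r S) : S.Infinite := by
  classical
  intro hfin
  obtain ⟨p, hpS, _, _, hpU, _, _, _⟩ := hS ∅ ∅ hfin.toFinset (by simp) (by simp)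
    (by simp [Set.Finite.coe_toFinset]) (by simp) (by simp) (by simp)
    (by simp) (by simp) (by simp)
  exact hpU (hfin.mem_toFinset.2 hpS)

lemma extIn_isCopy [Countable D] [Infinite D] (hirr : ∀ x, ¬ r x x)
    (htr : ∀ x y z, r x y → r y z → r x z) (hU : ExtIn r (univ : Set D))
    {S : Set D} (hS : ExtIn r S) : IsCopy r S := by
  classical
  have hSinf : S.Infinite := extIn_infinite' hirr hS
  have : Infinite ↥S := hSinf.to_subtype
  obtain ⟨ea⟩ : Nonempty (ℕ ≃ D) := nonempty_equiv_of_countable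
  obtain ⟨es⟩ : Nonempty (ℕ ≃ ↥S) := nonempty_equiv_of_countable
  set eb : ℕ → D := fun n => (es n : D) with hebdef
  have heb : ∀ n, eb n ∈ S := fun n => (es n).2
  set c : ℕ → {p : Finset (D × D) // Good r S p} :=
    chain hirr htr hU hS (fun n => ea n) eb heb with hcdef
  have hmono : ∀ {m n : ℕ}, m ≤ n → (c m).1 ⊆ (c n).1 :=
    fun h => chain_mono hirr htr hU hS _ eb heb h
  have hcovA : ∀ n, ea n ∈ (c (n+1)).1.image Prod.fst :=
    fun n => (chain_spec hirr htr hU hS _ eb heb n).2.1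
  have hcovB : ∀ n, eb n ∈ (c (n+1)).1.image Prod.snd :=
    fun n => (chain_spec hirr htr hU hS _ eb heb n).2.2
  have hex : ∀ x : D, ∃ b, (x, b) ∈ (c (ea.symm x + 1)).1 := by
    intro x
    have := hcovA (ea.symm x)
    rw [Equiv.apply_symm_apply] at this
    obtain ⟨z, hz, hz1⟩ := Finset.mem_image.1 this
    subst hz1
    exact ⟨z.2, by rwa [Prod.mk.eta]⟩
  set g : D → D := fun x => (hex x).choose with hgdef
  have hg : ∀ x, (x, g x) ∈ (c (ea.symm x + 1)).1 := fun x => (hex x).choose_spec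
  have hcommon : ∀ x y : D, ∃ N, (x, g x) ∈ (c N).1 ∧ (y, g y) ∈ (c N).1 := by
    intro x y
    exact ⟨max (ea.symm x + 1) (ea.symm y + 1),
      hmono (le_max_left _ _) (hg x), hmono (le_max_right _ _) (hg y)⟩
  have hginj : Function.Injective g := by
    intro x y hxy
    obtain ⟨N, h1, h2⟩ := hcommon x y
    exact (((c N).2.2 (x, g x) h1 (y, g y) h2).1).2 hxy
  have hiff : ∀ x y, r x y ↔ r (g x) (g y) := by
    intro x y
    obtain ⟨N, h1, h2⟩ := hcommon x y
    exact ((c N).2.2 (x, g x) h1 (y, g y) h2).2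
  refine ⟨g, hginj, ?_, hiff⟩
  apply Set.eq_of_subset_of_subset
  · rintro - ⟨x, rfl⟩
    exact (c _).2.1 (x, g x) (hg x)
  · intro s hs
    set m : ℕ := es.symm ⟨s, hs⟩ with hmdef
    have : s ∈ (c (m+1)).1.image Prod.snd := by
      have h := hcovB m
      have hsb : eb m = s := by
        simp only [hebdef, hmdef, Equiv.apply_symm_apply]
      rwa [hsb] at h
    obtain ⟨z, hz, hz2⟩ := Finset.mem_image.1 this
    have hz' : (z.1, s) ∈ (c (m+1)).1 := by rwa [← hz2, Prod.mk.eta]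
    have hgz : (z.1, g z.1) ∈ (c (ea.symm z.1 + 1)).1 := hg z.1
    set N := max (m+1) (ea.symm z.1 + 1) with hN
    have e1 : (z.1, s) ∈ (c N).1 := hmono (le_max_left _ _) hz'
    have e2 : (z.1, g z.1) ∈ (c N).1 := hmono (le_max_right _ _) hgz
    have : s = g z.1 := (((c N).2.2 (z.1, s) e1 (z.1, g z.1) e2).1).1 rfl
    exact ⟨z.1, this.symm⟩


end Aux

theorem statement_13 {D : Type*} [Countable D] [Infinite D] (r : D → D → Prop)
    (hrp : IsRandomPosetRel r) (C : Set D) (hCinf : C.Infinite)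
    (hC : ∀ S ⊆ C, ¬ IsCopy r S) :
    (∀ B ∈ {B : Set D | ((Set.univ \ C) \ B).Finite}, IsCopy r B) ∧
    IsPositiveFamily {B : Set D | ((Set.univ \ C) \ B).Finite} := by
  classical
  have hirr : ∀ x, ¬ r x x := hrp.1
  have htr : ∀ x y z, r x y → r y z → r x z := hrp.2.1
  have hUext : ExtIn r (univ : Set D) := extIn_univ hrp
  -- every member of the family has the internal extension property
  have key : ∀ B ∈ {B : Set D | ((Set.univ \ C) \ B).Finite}, ExtIn r B := by
    intro B hB
    intro L G U hL hG hU' dLG dLU dGU h4 h5 h6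
    by_contra hno
    set W : Set D := {p | p ∈ (univ : Set D) ∧ p ∉ L ∧ p ∉ G ∧ p ∉ U ∧ (∀ l ∈ L, r l p) ∧
      (∀ g ∈ G, r p g) ∧ ∀ u ∈ U, ¬ r p u ∧ ¬ r u p} with hWdef
    have hW : ExtIn r W := extIn_witness hirr htr hUext L G U (by simp) (by simp) (by simp)
      dLG dLU dGU h4 h5 h6
    have hWB : ∀ p ∈ W, p ∉ B := by
      intro p hp hpB
      exact hno ⟨p, hpB, hp.2⟩
    have hext : ExtIn r (W \ ((Set.univ \ C) \ B)) := extIn_diff_finite hirr htr hW hB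
    have hsub : W \ ((Set.univ \ C) \ B) ⊆ C := by
      intro x hx
      by_contra hxC
      exact hx.2 ⟨⟨trivial, hxC⟩, hWB x hx.1⟩
    exact hC _ hsub (extIn_isCopy hirr htr hUext hext)
  have copy : ∀ B ∈ {B : Set D | ((Set.univ \ C) \ B).Finite}, IsCopy r B :=
    fun B hB => extIn_isCopy hirr htr hUext (key B hB)
  refine ⟨copy, ?_, ?_, ?_, ?_⟩
  · -- ∅ is not in the family
    intro h0
    obtain ⟨f, -, hfr, -⟩ := copy ∅ h0
    obtain ⟨x⟩ : Nonempty D := inferInstance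
    exact absurd (hfr ▸ Set.mem_range_self x) (Set.notMem_empty (f x))
  · intro A B hA hAB
    exact hA.subset (fun x hx => ⟨hx.1, fun hxB => hx.2 (hAB hxB)⟩)
  · intro A hA F hF
    refine ((hA.union hF).subset ?_)
    intro x hx
    by_cases hxF : x ∈ F
    · exact Or.inr hxF
    · exact Or.inl ⟨hx.1, fun hxA => hx.2 ⟨hxA, hxF⟩⟩
  · refine ⟨Cᶜ, ?_, by simpa using hCinf⟩
    have : (Set.univ \ C) \ Cᶜ = ∅ := by
      ext x; simp [Set.mem_diff]
    simp only [Set.mem_setOf_eq, this]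
    exact Set.finite_empty
end

section
/- Let A ⊆ B ⊆ ℕ and let L be a complete linear order such that the cardinality of B \ A equals the cardinality of L minus one (i.e., if L is finite of size n+1 then |B \ A| = n, and if B \ A is infinite then L is countably infinite). Then there is a family ℒ of sets with A ∈ ℒ, B ∈ ℒ, A ⊆ C ⊆ B for all C ∈ ℒ, ℒ linearly ordered by ⊆ and order-isomorphic to L, and such that for each cut ⟨𝒜, ℬ⟩ of ℒ (a partition of ℒ into nonempty sets 𝒜, ℬ with every member of 𝒜 a proper subset of every member of ℬ) one has ⋃𝒜 ∈ ℒ, ⋂ℬ ∈ ℒ, and |⋂ℬ \ ⋃𝒜| ≤ 1. -/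
open Set

/-!
In a countable complete linear order the successor points (those covering another point) are
dense: if `(x, y]` contained none, nested intervals would produce a point outside any enumeration
of `L`. By the cardinality hypothesis they can therefore enumerate `B \ A`; giving the elements
of `A` the least rank, the chain is formed by the sets `{n ∈ B | ρ n ≤ l}`, `l ∈ L`, and density
makes `l ↦ {n ∈ B | ρ n ≤ l}` strictly monotone. A cut of the chain comes from a cut `P | Pᶜ`
of `L`: its union and intersection are the sets at `sup P` and `inf Pᶜ`, and since these two
points are adjacent the sets differ at most by the single element of rank `inf Pᶜ`.
-/

open Order

section CompleteLinearOrder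

variable {L : Type*} [LinearOrder L] {x y z : L}

lemma CompleteLO.exists_isBot (hL : CompleteLO L) : ∃ z : L, IsBot z :=
  let ⟨z, hz⟩ := (hL univ).2
  ⟨z, fun x => hz.1 (mem_univ x)⟩

lemma CompleteLO.exists_isTop (hL : CompleteLO L) : ∃ z : L, IsTop z :=
  let ⟨z, hz⟩ := (hL univ).1
  ⟨z, fun x => hz.1 (mem_univ x)⟩

lemma exists_Icc_notMem_of_forall_isSuccPrelimit (hlim : ∀ t ∈ Ioc x y, IsSuccPrelimit t)
    {a b : L} (hxa : x ≤ a) (hab : a < b) (hby : b ≤ y) (z : L) :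
    ∃ a' b', a ≤ a' ∧ a' < b' ∧ b' ≤ b ∧ z ∉ Icc a' b' := by
  obtain ⟨m, hmb, ham⟩ := (hlim b ⟨hxa.trans_lt hab, hby⟩).lt_iff_exists_lt.1 hab
  rcases lt_or_ge z m with hzm | hmz
  · exact ⟨m, b, ham.le, hmb, le_rfl, fun hz => hz.1.not_gt hzm⟩
  · obtain ⟨c, hcm, hac⟩ := (hlim m ⟨hxa.trans_lt ham, hmb.le.trans hby⟩).lt_iff_exists_lt.1 ham
    exact ⟨a, c, le_rfl, hac, (hcm.trans hmb).le, fun hz => hz.2.not_gt (hcm.trans_le hmz)⟩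

/-- Nested intervals: step `n` shrinks the interval so as to avoid `u n`, and the supremum of the
left endpoints lies in all the intervals. -/
lemma CompleteLO.not_surjective_of_forall_isSuccPrelimit (hL : CompleteLO L) (hxy : x < y)
    (hlim : ∀ t ∈ Ioc x y, IsSuccPrelimit t) (u : ℕ → L) : ¬ Function.Surjective u := by
  let I := {p : L × L // x ≤ p.1 ∧ p.1 < p.2 ∧ p.2 ≤ y}
  have shrink : ∀ (p : I) (z : L), ∃ q : I, p.1.1 ≤ q.1.1 ∧ q.1.2 ≤ p.1.2 ∧ z ∉ Icc q.1.1 q.1.2 :=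
    fun ⟨(a, b), hxa, hab, hby⟩ z => by
      obtain ⟨a', b', ha, hab', hb, hz⟩ :=
        exists_Icc_notMem_of_forall_isSuccPrelimit hlim hxa hab hby z
      exact ⟨⟨(a', b'), hxa.trans ha, hab', hb.trans hby⟩, ha, hb, hz⟩
  choose next hnext using shrink
  let g : ℕ → I := fun n => Nat.rec ⟨(x, y), le_rfl, hxy, le_rfl⟩ (fun n p => next p (u n)) n
  have ha : Monotone fun n => (g n).1.1 := monotone_nat_of_le_succ fun n => (hnext (g n) (u n)).1
  have hb : Antitone fun n => (g n).1.2 := antitone_nat_of_succ_le fun n => (hnext (g n) (u n)).2.1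
  have hab : ∀ n m, (g n).1.1 ≤ (g m).1.2 := fun n m =>
    (ha (le_max_left n m)).trans ((g (max n m)).2.2.1.le.trans (hb (le_max_right n m)))
  obtain ⟨s, hs⟩ := (hL (range fun n => (g n).1.1)).1
  have hsI : ∀ n, s ∈ Icc (g n).1.1 (g n).1.2 := fun n =>
    ⟨hs.1 (mem_range_self n), hs.2 (forall_mem_range.2 fun m => hab m n)⟩
  intro hu
  obtain ⟨n, rfl⟩ := hu s
  exact (hnext (g n) (u n)).2.2 (hsI (n + 1))

lemma CompleteLO.exists_mem_Ioc_not_isSuccPrelimit [Countable L] (hL : CompleteLO L)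
    (hxy : x < y) : ∃ t ∈ Ioc x y, ¬IsSuccPrelimit t := by
  by_contra! hlim
  have : Nonempty L := ⟨x⟩
  obtain ⟨u, hu⟩ := exists_surjective_nat L
  exact hL.not_surjective_of_forall_isSuccPrelimit hxy hlim u hu

lemma Set.infinite_of_forall_exists_mem_Ioc [Infinite L] {T : Set L}
    (hT : ∀ x y : L, x < y → ∃ t ∈ Ioc x y, t ∈ T) : T.Infinite := by
  intro hfin
  have := hfin.to_subtype
  have hmono : StrictMono fun l : L => {t : T | (t : L) ≤ l} := fun x y hxy => by
    refine lt_of_le_of_ne (fun t ht => le_trans ht hxy.le) fun heq => ?_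
    obtain ⟨t, ⟨hxt, hty⟩, htT⟩ := hT x y hxy
    exact hxt.not_ge ((Set.ext_iff.1 heq ⟨t, htT⟩).2 hty)
  exact not_finite_iff_infinite.2 ‹Infinite L› (Finite.of_injective _ hmono.injective)

lemma setOf_not_isSuccPrelimit_eq_compl [Finite L] (hz : IsBot z) :
    {t : L | ¬IsSuccPrelimit t} = {z}ᶜ := by
  ext t
  refine ⟨fun ht htz => ht (htz ▸ hz.isMin.isSuccPrelimit), fun htz => ?_⟩
  obtain ⟨a, -, hat⟩ := exists_le_covBy_of_lt ((hz t).lt_of_ne (Ne.symm htz))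
  exact not_isSuccPrelimit_iff.2 ⟨a, hat⟩

lemma CompleteLO.nonempty_equiv_setOf_not_isSuccPrelimit {α : Type*} [Countable α] {D : Set α}
    (hL : CompleteLO L)
    (hcard : (D.Finite ∧ Finite L ∧ Nat.card L = D.ncard + 1) ∨
      (D.Infinite ∧ Countable L ∧ Infinite L)) :
    Nonempty ({t : L | ¬IsSuccPrelimit t} ≃ D) := by
  rcases hcard with ⟨hD, _, hcardL⟩ | ⟨hD, _, _⟩
  · obtain ⟨z, hz⟩ := hL.exists_isBot
    have := hD.to_subtype
    rw [setOf_not_isSuccPrelimit_eq_compl hz, ← Finite.card_eq, Nat.card_coe_set_eq,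
      Nat.card_coe_set_eq, ncard_compl_of_ncard_eq_add _ (by rw [hcardL, ncard_singleton])]
  · have := hD.to_subtype
    have := (infinite_of_forall_exists_mem_Ioc (T := {t : L | ¬IsSuccPrelimit t})
      fun _ _ => hL.exists_mem_Ioc_not_isSuccPrelimit).to_subtype
    exact nonempty_equiv_of_countable

end CompleteLinearOrder

lemma IsLowerSet.wcovBy_of_isLUB_of_isGLB {L : Type*} [LinearOrder L] {P : Set L} {s i : L}
    (hP : IsLowerSet P) (hs : IsLUB P s) (hi : IsGLB Pᶜ i) : s ⩿ i := by
  have hle : ∀ p ∈ P, ∀ q ∈ Pᶜ, p ≤ q := fun p hp q hq => le_of_not_gt fun hqp => hq (hP hqp.le hp)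
  refine ⟨hs.2 fun p hp => hi.2 fun q hq => hle p hp q hq, fun c hsc hci => ?_⟩
  by_cases hc : c ∈ P
  · exact (hs.1 hc).not_gt hsc
  · exact (hi.1 hc).not_gt hci

lemma Monotone.exists_isLowerSet_of_union_eq_range {L β : Type*} [LinearOrder L] [Preorder β]
    {f : L → β} (hf : Monotone f) {𝒜 ℬ : Set β} (hun : 𝒜 ∪ ℬ = range f)
    (hlt : ∀ a ∈ 𝒜, ∀ b ∈ ℬ, a < b) : ∃ P : Set L, IsLowerSet P ∧ 𝒜 = f '' P ∧ ℬ = f '' Pᶜ := by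
  have hmem : ∀ l, f l ∈ 𝒜 ∪ ℬ := fun l => hun ▸ mem_range_self l
  refine ⟨f ⁻¹' 𝒜, fun x y hyx hx => ?_,
    (image_preimage_eq_of_subset (hun ▸ subset_union_left)).symm, ?_⟩
  · exact (hmem y).resolve_right fun hy => (hlt _ hx _ hy).not_ge (hf hyx)
  · ext b
    refine ⟨fun hb => ?_, ?_⟩
    · obtain ⟨l, rfl⟩ : b ∈ range f := hun ▸ mem_union_right 𝒜 hb
      exact ⟨l, fun hl => lt_irrefl _ (hlt _ hl _ hb), rfl⟩
    · rintro ⟨l, hl, rfl⟩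
      exact (hmem l).resolve_left hl

section Sublevel

variable {α L : Type*} [LinearOrder L] (B : Set α) (ρ : α → L)

def sublevel (l : L) : Set α := {n ∈ B | ρ n ≤ l}

lemma monotone_sublevel : Monotone (sublevel B ρ) :=
  fun _ _ hxy _ hn => ⟨hn.1, hn.2.trans hxy⟩

variable {B ρ}

lemma sublevel_of_isTop {z : L} (hz : IsTop z) : sublevel B ρ z = B :=
  sep_eq_self_iff_mem_true.2 fun n _ => hz (ρ n)

lemma strictMono_sublevel (h : ∀ x y, x < y → ∃ n ∈ B, ρ n ∈ Ioc x y) :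
    StrictMono (sublevel B ρ) := fun x y hxy => by
  obtain ⟨n, hn, hxn, hny⟩ := h x y hxy
  exact (monotone_sublevel B ρ hxy.le).lt_of_not_ge fun hle => (hle ⟨hn, hny⟩).2.not_gt hxn

lemma sInter_image_sublevel {Q : Set L} {i : L} (hi : IsGLB Q i) (hQ : Q.Nonempty) :
    ⋂₀ (sublevel B ρ '' Q) = sublevel B ρ i := by
  obtain ⟨q₀, hq₀⟩ := hQ
  ext n
  simp only [sInter_image, mem_iInter]
  refine ⟨fun h => ⟨(h q₀ hq₀).1, (le_isGLB_iff hi).2 fun q hq => (h q hq).2⟩, ?_⟩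
  rintro ⟨hB, hni⟩ q hq
  exact ⟨hB, hni.trans (hi.1 hq)⟩

/-- A supremum that is not attained is a limit, and limits are not ranks. -/
lemma sUnion_image_sublevel (hρ : ∀ n ∈ B, ¬IsSuccLimit (ρ n)) {P : Set L} {s : L}
    (hs : IsLUB P s) (hP : P.Nonempty) : ⋃₀ (sublevel B ρ '' P) = sublevel B ρ s := by
  refine subset_antisymm
    (sUnion_subset (forall_mem_image.2 fun p hp => monotone_sublevel B ρ (hs.1 hp))) ?_
  rintro n ⟨hB, hns⟩
  obtain ⟨p, hp, hnp⟩ : ∃ p ∈ P, ρ n ≤ p := by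
    rcases hns.lt_or_eq with hlt | rfl
    · obtain ⟨p, hp, hnp, -⟩ := hs.exists_between hlt
      exact ⟨p, hp, hnp.le⟩
    · exact ⟨ρ n, hs.mem_of_not_isSuccLimit hP (hρ n hB), le_rfl⟩
  exact mem_sUnion.2 ⟨_, mem_image_of_mem _ hp, hB, hnp⟩

lemma subsingleton_sublevel_diff (hρ : InjOn ρ {n ∈ B | ¬IsMin (ρ n)}) {s i : L} (hsi : s ⩿ i) :
    (sublevel B ρ i \ sublevel B ρ s).Subsingleton := by
  have hrank : ∀ n ∈ sublevel B ρ i \ sublevel B ρ s, n ∈ {n ∈ B | ¬IsMin (ρ n)} ∧ ρ n = i := by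
    rintro n ⟨⟨hB, hni⟩, hns⟩
    have hsn : s < ρ n := lt_of_not_ge fun h => hns ⟨hB, h⟩
    exact ⟨⟨hB, hsn.not_isMin⟩, hni.antisymm (hsi.ge_of_gt hsn)⟩
  intro n hn m hm
  exact hρ (hrank n hn).1 (hrank m hm).1 ((hrank n hn).2.trans (hrank m hm).2.symm)

end Sublevel

structure IsRanking {α L : Type*} [LinearOrder L] (A B : Set α) (ρ : α → L) : Prop where
  subset : A ⊆ B
  isBot : ∀ n ∈ A, IsBot (ρ n)
  bijOn : BijOn ρ (B \ A) {t | ¬IsSuccPrelimit t}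

lemma exists_bijOn_of_equiv {α β : Type*} {s : Set α} {t : Set β} (e : s ≃ t) (b : β) :
    ∃ f : α → β, (∀ a ∉ s, f a = b) ∧ BijOn f s t := by
  classical
  refine ⟨fun a => if h : a ∈ s then e ⟨a, h⟩ else b, fun a ha => dif_neg ha,
    fun a ha => by simp [ha], fun a ha a' ha' h => ?_, fun c hc => ?_⟩
  · simp only [ha, ha', dite_true, Subtype.coe_inj] at h
    exact congrArg Subtype.val (e.injective h)
  · exact ⟨e.symm ⟨c, hc⟩, (e.symm ⟨c, hc⟩).2, by simp⟩

lemma exists_isRanking {α L : Type*} [LinearOrder L] {A B : Set α} (hAB : A ⊆ B) {z : L}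
    (hz : IsBot z) (e : {t : L | ¬IsSuccPrelimit t} ≃ ↥(B \ A)) : ∃ ρ : α → L, IsRanking A B ρ := by
  obtain ⟨ρ, hρA, hρ⟩ := exists_bijOn_of_equiv e.symm z
  exact ⟨ρ, hAB, fun n hn => hρA n (fun h => h.2 hn) ▸ hz, hρ⟩

namespace IsRanking

variable {α L : Type*} [LinearOrder L] {A B : Set α} {ρ : α → L}

lemma not_isSuccLimit (hρ : IsRanking A B ρ) : ∀ n ∈ B, ¬IsSuccLimit (ρ n) := fun n hB hlim => by
  by_cases hA : n ∈ A
  · exact (hρ.isBot n hA).isMin.not_isSuccLimit hlim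
  · exact hρ.bijOn.mapsTo ⟨hB, hA⟩ hlim.isSuccPrelimit

lemma injOn (hρ : IsRanking A B ρ) : InjOn ρ {n ∈ B | ¬IsMin (ρ n)} :=
  hρ.bijOn.injOn.mono fun _ hn => mem_sdiff_of_mem hn.1 fun hA => hn.2 (hρ.isBot _ hA).isMin

lemma subset_sublevel (hρ : IsRanking A B ρ) (l : L) : A ⊆ sublevel B ρ l :=
  fun n hn => ⟨hρ.subset hn, hρ.isBot n hn l⟩

lemma sublevel_of_isBot (hρ : IsRanking A B ρ) {z : L} (hz : IsBot z) : sublevel B ρ z = A := by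
  refine subset_antisymm (fun n hn => ?_) (hρ.subset_sublevel z)
  by_contra hA
  exact hρ.bijOn.mapsTo ⟨hn.1, hA⟩ (IsMin.isSuccPrelimit fun w _ => hn.2.trans (hz w))

lemma strictMono_sublevel (hρ : IsRanking A B ρ) [Countable L] (hL : CompleteLO L) :
    StrictMono (sublevel B ρ) :=
  _root_.strictMono_sublevel fun _ _ hxy => by
    obtain ⟨t, ht, htT⟩ := hL.exists_mem_Ioc_not_isSuccPrelimit hxy
    obtain ⟨n, hn, rfl⟩ := hρ.bijOn.surjOn htT
    exact ⟨n, hn.1, ht⟩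

end IsRanking

theorem statement_14 (A B : Set ℕ) (hAB : A ⊆ B) (L : Type*) [LinearOrder L]
    (hcomp : CompleteLO L)
    (hcard : ((B \ A).Finite ∧ Finite L ∧ Nat.card L = (B \ A).ncard + 1) ∨
             ((B \ A).Infinite ∧ Countable L ∧ Infinite L)) :
    ∃ 𝓛 : Set (Set ℕ), A ∈ 𝓛 ∧ B ∈ 𝓛 ∧ (∀ C ∈ 𝓛, A ⊆ C ∧ C ⊆ B) ∧
      IsChain (· ⊆ ·) 𝓛 ∧ Nonempty (L ≃o ↥𝓛) ∧
      ∀ 𝒜 ℬ : Set (Set ℕ), 𝒜.Nonempty → ℬ.Nonempty → 𝒜 ∪ ℬ = 𝓛 → 𝒜 ∩ ℬ = ∅ →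
        (∀ A' ∈ 𝒜, ∀ B' ∈ ℬ, A' ⊂ B') →
        ⋃₀ 𝒜 ∈ 𝓛 ∧ ⋂₀ ℬ ∈ 𝓛 ∧ (⋂₀ ℬ \ ⋃₀ 𝒜).Subsingleton := by
  have : Countable L := by
    rcases hcard with ⟨-, _, -⟩ | ⟨-, _, -⟩ <;> infer_instance
  obtain ⟨z₀, hz₀⟩ := hcomp.exists_isBot
  obtain ⟨z₁, hz₁⟩ := hcomp.exists_isTop
  obtain ⟨e⟩ := hcomp.nonempty_equiv_setOf_not_isSuccPrelimit hcard
  obtain ⟨ρ, hρ⟩ := exists_isRanking hAB hz₀ e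
  have hmono := hρ.strictMono_sublevel hcomp
  refine ⟨range (sublevel B ρ), ⟨z₀, hρ.sublevel_of_isBot hz₀⟩, ⟨z₁, sublevel_of_isTop hz₁⟩,
    ?_, hmono.monotone.isChain_range, ⟨hmono.orderIso _⟩, ?_⟩
  · rintro _ ⟨l, rfl⟩
    exact ⟨hρ.subset_sublevel l, sep_subset _ _⟩
  · intro 𝒜 ℬ h𝒜 hℬ hun _ hlt
    obtain ⟨P, hP, rfl, rfl⟩ := hmono.monotone.exists_isLowerSet_of_union_eq_range hun hlt
    obtain ⟨s, hs⟩ := (hcomp P).1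
    obtain ⟨i, hi⟩ := (hcomp Pᶜ).2
    rw [sUnion_image_sublevel hρ.not_isSuccLimit hs h𝒜.of_image,
      sInter_image_sublevel hi hℬ.of_image]
    exact ⟨mem_range_self s, mem_range_self i,
      subsingleton_sublevel_diff hρ.injOn (hP.wcovBy_of_isLUB_of_isGLB hs hi)⟩
end
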